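/- arXiv:1812.05025 — 9 statements merged into one kernel-verified Lean document; each statement's English description precedes it below -/
import Mathlib

section
/- Let K be a compact Hausdorff space and X a Banach space, and let m : C(K) → L(X) be a contractive unital algebra homomorphism. If a, b ∈ C(K) satisfy |a| ≤ |b| pointwise, then ‖m(a)x‖ ≤ ‖m(b)x‖ for every x ∈ X. -/
/-!
For `δ > 0` the function `c = a b / (b² + δ²)` has `‖c‖ ≤ 1` and `‖a - c b‖ ≤ δ / 2`, so `a`
lies in the closure of `{c b : ‖c‖ ≤ 1}`. For such products
`‖m (c b) x‖ ≤ ‖m c‖ ‖m b x‖ ≤ ‖m b x‖`, and the inequality passes to the closure because a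
contractive `m` is continuous.
-/

open Metric

lemma abs_mul_div_sq_add_sq_le_one {s t δ : ℝ} (hst : |s| ≤ |t|) (hδ : 0 < δ) :
    |s * t / (t ^ 2 + δ ^ 2)| ≤ 1 := by
  have hpos : 0 < t ^ 2 + δ ^ 2 := by positivity
  rw [abs_div, abs_of_pos hpos, div_le_one hpos, abs_mul]
  nlinarith [sq_abs t, abs_nonneg s, abs_nonneg t]

lemma abs_sub_mul_div_sq_add_sq_mul_le {s t δ : ℝ} (hst : |s| ≤ |t|) (hδ : 0 < δ) :
    |s - s * t / (t ^ 2 + δ ^ 2) * t| ≤ δ / 2 := by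
  have hpos : 0 < t ^ 2 + δ ^ 2 := by positivity
  have hsub : s - s * t / (t ^ 2 + δ ^ 2) * t = s * δ ^ 2 / (t ^ 2 + δ ^ 2) := by
    field_simp
    ring
  have hamgm : 2 * |t| * δ ≤ t ^ 2 + δ ^ 2 := by
    nlinarith [sq_nonneg (|t| - δ), sq_abs t]
  rw [hsub, abs_div, abs_of_pos hpos, abs_mul, abs_of_pos (by positivity : 0 < δ ^ 2),
    div_le_iff₀ hpos]
  nlinarith [abs_nonneg s, mul_le_mul_of_nonneg_right hst (sq_nonneg δ)]

namespace ContinuousMap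

variable {K : Type*} [TopologicalSpace K] [CompactSpace K]

theorem mem_closure_image_mul_closedBall_of_abs_le {a b : C(K, ℝ)}
    (hab : ∀ k, |a k| ≤ |b k|) :
    a ∈ closure ((· * b) '' closedBall 0 1) := by
  refine Metric.mem_closure_iff.2 fun δ hδ => ?_
  have hpos : ∀ k, 0 < b k ^ 2 + δ ^ 2 := fun k => by positivity
  let c : C(K, ℝ) := ⟨fun k => a k * b k / (b k ^ 2 + δ ^ 2),
    (a.continuous.mul b.continuous).div (by fun_prop) fun k => (hpos k).ne'⟩
  refine ⟨c * b, ⟨c, ?_, rfl⟩, ?_⟩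
  · rw [mem_closedBall_zero_iff, ContinuousMap.norm_le _ zero_le_one]
    exact fun k => abs_mul_div_sq_add_sq_le_one (hab k) hδ
  · rw [dist_eq_norm]
    refine lt_of_le_of_lt ?_ (half_lt_self hδ)
    exact (ContinuousMap.norm_le _ (by positivity)).2 fun k =>
      abs_sub_mul_div_sq_add_sq_mul_le (hab k) hδ

end ContinuousMap

section

variable {𝕜 A X : Type*} [NontriviallyNormedField 𝕜] [NormedRing A] [Algebra 𝕜 A]
  [NormedAddCommGroup X] [NormedSpace 𝕜 X]

theorem AlgHom.norm_apply_le_of_mem_closure_image_mul_closedBall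
    (m : A →ₐ[𝕜] (X →L[𝕜] X)) (hm : ∀ a, ‖m a‖ ≤ ‖a‖) {a b : A}
    (ha : a ∈ closure ((· * b) '' closedBall 0 1)) (x : X) :
    ‖m a x‖ ≤ ‖m b x‖ := by
  have hcont : Continuous fun a => m a x :=
    (ContinuousLinearMap.apply 𝕜 X x).continuous.comp
      (AddMonoidHomClass.continuous_of_bound m 1 fun a => by simpa using hm a)
  refine closure_minimal ?_ (isClosed_le hcont.norm continuous_const) ha
  rintro _ ⟨c, hc, rfl⟩
  calc ‖m (c * b) x‖ = ‖m c (m b x)‖ := by rw [map_mul]; rfl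
    _ ≤ ‖m c‖ * ‖m b x‖ := (m c).le_opNorm _
    _ ≤ 1 * ‖m b x‖ := by gcongr; exact (hm c).trans (mem_closedBall_zero_iff.1 hc)
    _ = ‖m b x‖ := one_mul _

end

theorem stmt0_general {K X : Type*} [TopologicalSpace K] [CompactSpace K]
    [NormedAddCommGroup X] [NormedSpace ℝ X]
    (m : C(K, ℝ) →ₐ[ℝ] (X →L[ℝ] X))
    (hm : ∀ a : C(K, ℝ), ‖m a‖ ≤ ‖a‖)
    (a b : C(K, ℝ)) (hab : ∀ k, |a k| ≤ |b k|) (x : X) :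
    ‖m a x‖ ≤ ‖m b x‖ :=
  m.norm_apply_le_of_mem_closure_image_mul_closedBall hm
    (ContinuousMap.mem_closure_image_mul_closedBall_of_abs_le hab) x

theorem stmt0 {K X : Type*} [TopologicalSpace K] [CompactSpace K] [T2Space K]
    [NormedAddCommGroup X] [NormedSpace ℝ X] [CompleteSpace X]
    (m : C(K, ℝ) →ₐ[ℝ] (X →L[ℝ] X))
    (hm : ∀ a : C(K, ℝ), ‖m a‖ ≤ ‖a‖)
    (a b : C(K, ℝ)) (hab : ∀ k, |a k| ≤ |b k|) (x : X) :
    ‖m a x‖ ≤ ‖m b x‖ :=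
  stmt0_general m hm a b hab x
end

section
/- Let K be a compact Hausdorff space and X a Banach space, and let m : C(K) → L(X) be a contractive unital algebra homomorphism. If m is injective, then m is an isometry, i.e. ‖m(a)‖ = ‖a‖ for all a ∈ C(K). -/
/-!
Every value `a x₀` lies in the spectrum of `m a`, so `|a x₀| ≤ ‖m a‖`. Indeed, if `a x₀ - m a`
had an inverse `u`, then for `f` supported where `a` is close to `a x₀` the element
`m f = u * m ((a x₀ - a) * f)` would have norm `< 1`, which kills `m g` for every `g` with
`g * f = g`; by injectivity `g = 0`, although Urysohn's lemma provides such a `g` with `g x₀ = 1`.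
-/

open Set

theorem eq_zero_of_mul_eq_self_of_norm_lt_one {A : Type*} [NonUnitalNormedRing A]
    {x y : A} (hxy : x * y = x) (hy : ‖y‖ < 1) : x = 0 := by
  have hle : ‖x‖ ≤ ‖x‖ * ‖y‖ := by
    calc ‖x‖ = ‖x * y‖ := by rw [hxy]
      _ ≤ ‖x‖ * ‖y‖ := norm_mul_le x y
  exact norm_eq_zero.mp (by nlinarith [norm_nonneg x])

theorem exists_continuous_mul_eq_self_of_isOpen {K : Type*} [TopologicalSpace K]
    [RegularSpace K] [LocallyCompactSpace K] {V : Set K} (hV : IsOpen V) {x₀ : K} (hx₀ : x₀ ∈ V) :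
    ∃ f g : C(K, ℝ), EqOn f 0 Vᶜ ∧ (∀ x, f x ∈ Icc (0 : ℝ) 1) ∧ g x₀ = 1 ∧ g * f = g := by
  obtain ⟨L, hL, -, hx₀L, hLV⟩ :=
    exists_compact_closed_between isCompact_singleton hV (singleton_subset_iff.mpr hx₀)
  obtain ⟨f, hf1, hf0, -, hf01⟩ := exists_continuous_one_zero_of_isCompact hL hV.isClosed_compl
    (disjoint_compl_right_iff_subset.mpr hLV)
  obtain ⟨g, hg1, hg0, -, -⟩ := exists_continuous_one_zero_of_isCompact isCompact_singleton
    isOpen_interior.isClosed_compl (disjoint_compl_right_iff_subset.mpr hx₀L)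
  refine ⟨f, g, hf0, hf01, hg1 rfl, ContinuousMap.ext fun x => ?_⟩
  by_cases hx : x ∈ interior L
  · simp [hf1 (interior_subset hx)]
  · simp [hg0 hx]

theorem apply_mem_spectrum_of_injective {K A : Type*} [TopologicalSpace K] [CompactSpace K]
    [RegularSpace K] [NormedRing A] [NormedAlgebra ℝ A] (m : C(K, ℝ) →ₐ[ℝ] A) (hm : Continuous m)
    (hinj : Function.Injective m) (a : C(K, ℝ)) (x₀ : K) : a x₀ ∈ spectrum ℝ (m a) := by
  intro hunit
  set b : C(K, ℝ) := algebraMap ℝ C(K, ℝ) (a x₀) - a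
  have hmb : IsUnit (m b) := by rwa [map_sub, AlgHom.commutes]
  obtain ⟨u, hub⟩ : ∃ u : A, u * m b = 1 := ⟨_, hmb.unit.inv_mul⟩
  obtain ⟨δ, hδ, hsmall⟩ : ∃ δ > 0, ∀ c : C(K, ℝ), ‖c‖ < δ → ‖u * m c‖ < 1 := by
    have hcont : Continuous fun c => u * m c := continuous_const.mul hm
    simpa using Metric.continuousAt_iff.mp (hcont.continuousAt (x := 0)) 1 one_pos
  have hbx₀ : b x₀ = 0 := by simp [b]
  obtain ⟨f, g, hf0, hf01, hgx₀, hgf⟩ := exists_continuous_mul_eq_self_of_isOpen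
    (isOpen_lt (map_continuous b).abs continuous_const) (x₀ := x₀)
    (show |b x₀| < δ / 2 by simpa [hbx₀] using hδ)
  have hbf : ‖b * f‖ < δ := by
    refine ((ContinuousMap.norm_le _ (half_pos hδ).le).mpr fun x => ?_).trans_lt (half_lt_self hδ)
    by_cases hx : |b x| < δ / 2
    · calc ‖(b * f) x‖ = |b x| * |f x| := abs_mul _ _
        _ ≤ δ / 2 * 1 := by
          gcongr
          exact abs_le.mpr ⟨by linarith [(hf01 x).1], (hf01 x).2⟩
        _ = δ / 2 := mul_one _
    · simpa [hf0 hx] using (half_pos hδ).le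
  have hmf : m f = u * m (b * f) := by rw [map_mul, ← mul_assoc, hub, one_mul]
  have hmg : m g = 0 :=
    eq_zero_of_mul_eq_self_of_norm_lt_one (y := m f) (by rw [← map_mul, hgf])
      (hmf ▸ hsmall _ hbf)
  have hg : g = 0 := hinj (by rw [hmg, map_zero])
  simp [hg] at hgx₀

theorem stmt1 {K X : Type*} [TopologicalSpace K] [CompactSpace K] [T2Space K]
    [NormedAddCommGroup X] [NormedSpace ℝ X] [CompleteSpace X]
    (m : C(K, ℝ) →ₐ[ℝ] (X →L[ℝ] X))
    (hm : ∀ a : C(K, ℝ), ‖m a‖ ≤ ‖a‖)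
    (hinj : Function.Injective m) :
    ∀ a : C(K, ℝ), ‖m a‖ = ‖a‖ := by
  intro a
  have hcont : Continuous m := AddMonoidHomClass.continuous_of_bound m 1 (by simpa using hm)
  refine le_antisymm (hm a) ((ContinuousMap.norm_le a (norm_nonneg _)).mpr fun x => ?_)
  calc ‖a x‖ ≤ ‖m a‖ * ‖(1 : X →L[ℝ] X)‖ :=
        spectrum.norm_le_norm_mul_of_mem (apply_mem_spectrum_of_injective m hcont hinj a x)
    _ ≤ ‖m a‖ := mul_le_of_le_one_right (norm_nonneg _) (ContinuousLinearMap.norm_id_le)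
end

section
/- Let K be a totally disconnected compact Hausdorff space, X a Banach C(K)-module via an isometric unital algebra homomorphism m : C(K) → L(X), and let x ∈ X have a carrier projection e_x (an idempotent in C(K) with m(e_x)x = x that is minimal among idempotents e with m(e)x = x). Then for every a ∈ C(K), m(a)x = 0 if and only if a·e_x = 0 in C(K). -/
open Filter Topology

/-- `e` is the carrier projection of `x`: an idempotent in `C(K)` with `m e x = x`,
minimal among all idempotents `f` with `m f x = x`. -/
def IsCarrier {K X : Type*} [TopologicalSpace K] [CompactSpace K] [T2Space K]
    [NormedAddCommGroup X] [NormedSpace ℝ X] [CompleteSpace X]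
    (m : C(K, ℝ) →ₐ[ℝ] (X →L[ℝ] X)) (x : X) (e : C(K, ℝ)) : Prop :=
  e * e = e ∧ m e x = x ∧ ∀ f : C(K, ℝ), f * f = f → m f x = x → e ≤ f


/-! If `m a x = 0` but `a * e` does not vanish at some point, total disconnectedness gives a
clopen neighbourhood `V` of that point on which `a * e` has no zero. The indicator `χ` of `V` is
then a multiple of `a * e`, so it kills `x`, and it lies below `e`; hence `e - χ` is a strictly
smaller idempotent fixing `x`, contradicting the minimality of `e`. -/

namespace ContinuousMap

variable {K : Type*} [TopologicalSpace K]

lemma isIdempotentElem_apply {R : Type*} [Mul R] [TopologicalSpace R] [ContinuousMul R]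
    {e : C(K, R)} (he : IsIdempotentElem e) (k : K) : IsIdempotentElem (e k) :=
  congr($he k)

variable {R : Type*} [MulZeroOneClass R] [TopologicalSpace R] [ContinuousMul R] {V : Set K}

lemma isIdempotentElem_charFn (hV : IsClopen V) :
    IsIdempotentElem (LocallyConstant.charFn R hV : C(K, R)) := by
  ext k
  by_cases hk : k ∈ V <;> simp [LocallyConstant.coe_charFn, hk]

lemma charFn_mul_of_eqOn_one (hV : IsClopen V) {e : C(K, R)} (he : Set.EqOn e 1 V) :
    (LocallyConstant.charFn R hV : C(K, R)) * e = LocallyConstant.charFn R hV := by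
  ext k
  by_cases hk : k ∈ V
  · simp [LocallyConstant.coe_charFn, hk, he hk]
  · simp [LocallyConstant.coe_charFn, hk]

lemma exists_mul_eq_charFn {𝕜 : Type*} [DivisionRing 𝕜] [TopologicalSpace 𝕜]
    [ContinuousMul 𝕜] [ContinuousInv₀ 𝕜] (hV : IsClopen V) {b : C(K, 𝕜)}
    (hb : ∀ k ∈ V, b k ≠ 0) :
    ∃ h : C(K, 𝕜), h * b = LocallyConstant.charFn 𝕜 hV := by
  have hcont : Continuous (V.indicator fun k ↦ (b k)⁻¹) :=
    continuous_indicator (by simp [hV.frontier_eq])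
      (hV.isClosed.closure_eq ▸ b.continuous.continuousOn.inv₀ hb :)
  refine ⟨⟨_, hcont⟩, ?_⟩
  ext k
  by_cases hk : k ∈ V <;> simp [LocallyConstant.coe_charFn, hk, hb k]

end ContinuousMap

section Carrier

variable {K X : Type*} [TopologicalSpace K] [CompactSpace K] [T2Space K]
    [NormedAddCommGroup X] [NormedSpace ℝ X] [CompleteSpace X]
    {m : C(K, ℝ) →ₐ[ℝ] (X →L[ℝ] X)} {x : X} {e : C(K, ℝ)}

lemma IsCarrier.eq_zero_of_isIdempotentElem (he : IsCarrier m x e) {χ : C(K, ℝ)}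
    (hχ : IsIdempotentElem χ) (hχe : χ * e = χ) (hχx : m χ x = 0) : χ = 0 := by
  obtain ⟨hee, hex, hmin⟩ := he
  have hle : e ≤ e - χ :=
    hmin _ (hχ.sub hee hχe (by rw [mul_comm, hχe]))
      (by rw [map_sub, sub_apply, hex, hχx, sub_zero])
  refine le_antisymm (fun k ↦ by simpa using hle k) (fun k ↦ ?_)
  rw [← hχ]
  exact mul_self_nonneg (χ k)

lemma IsCarrier.map_mul_apply (he : IsCarrier m x e) (a : C(K, ℝ)) : m (a * e) x = m a x := by
  rw [map_mul, mul_apply_eq_comp, he.2.1]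

end Carrier

theorem stmt3_general {K X : Type*} [TopologicalSpace K] [CompactSpace K] [T2Space K]
    [TotallyDisconnectedSpace K]
    [NormedAddCommGroup X] [NormedSpace ℝ X] [CompleteSpace X]
    (m : C(K, ℝ) →ₐ[ℝ] (X →L[ℝ] X))
    (x : X) (e : C(K, ℝ)) (he : IsCarrier m x e) :
    ∀ a : C(K, ℝ), m a x = 0 ↔ a * e = 0 := by
  intro a
  refine ⟨fun hax ↦ ?_, fun hae ↦ by
    rw [← he.map_mul_apply, hae, map_zero, zero_apply]⟩
  by_contra hne
  obtain ⟨k, hk⟩ : ∃ k, (a * e) k ≠ 0 := by simpa [ContinuousMap.ext_iff] using hne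
  obtain ⟨V, hV, hkV, hVae⟩ :=
    compact_exists_isClopen_in_isOpen (isOpen_ne_fun (a * e).continuous continuous_const) hk
  obtain ⟨h, hh⟩ := ContinuousMap.exists_mul_eq_charFn hV hVae
  have he_one : Set.EqOn e 1 V := fun k' hk' ↦
    (IsIdempotentElem.iff_eq_zero_or_one.mp (ContinuousMap.isIdempotentElem_apply he.1 k'))
      |>.resolve_left (right_ne_zero_of_mul (hVae hk'))
  have hχ_zero := he.eq_zero_of_isIdempotentElem (ContinuousMap.isIdempotentElem_charFn hV)
    (ContinuousMap.charFn_mul_of_eqOn_one hV he_one)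
    (by rw [← hh, map_mul, mul_apply_eq_comp, he.map_mul_apply, hax, map_zero])
  simpa [LocallyConstant.coe_charFn, hkV] using congr($hχ_zero k)

theorem stmt3 {K X : Type*} [TopologicalSpace K] [CompactSpace K] [T2Space K]
    [TotallyDisconnectedSpace K]
    [NormedAddCommGroup X] [NormedSpace ℝ X] [CompleteSpace X]
    (m : C(K, ℝ) →ₐ[ℝ] (X →L[ℝ] X))
    (hm : ∀ a : C(K, ℝ), ‖m a‖ = ‖a‖)
    (x : X) (e : C(K, ℝ)) (he : IsCarrier m x e) :
    ∀ a : C(K, ℝ), m a x = 0 ↔ a * e = 0 :=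
  stmt3_general m x e he
end

section
/- Let K be a totally disconnected compact Hausdorff space, X an isometric Banach C(K)-module, x ∈ X with carrier projection e_x, and let a be a nonnegative function in C(K) with m(a)x = 0. Then a vanishes on the support of e_x, i.e. a·e_x = 0. -/
/-!
Where `a` does not vanish, a clopen neighbourhood `V` (total disconnectedness) carries the
continuous inverse of `a`, so the indicator `p` of `V` is a multiple of `a` and `m p x = 0`.
Then `1 - p` is an idempotent fixing `x`, and minimality of the carrier gives `e ≤ 1 - p`,
i.e. `e` vanishes on `V`.
-/

open Filter Topology

open Set

namespace ContinuousMap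

variable {K : Type*} [TopologicalSpace K]

theorem exists_mul_eq_indicator_of_isClopen {V : Set K} (hV : IsClopen V) {a : C(K, ℝ)}
    (ha : ∀ y ∈ V, a y ≠ 0) : ∃ b : C(K, ℝ), ⇑(a * b) = V.indicator 1 := by
  have hinv : ContinuousOn (fun y => (a y)⁻¹) (closure V) := by
    rw [hV.isClosed.closure_eq]
    exact a.continuous.continuousOn.inv₀ ha
  refine ⟨⟨V.indicator fun y => (a y)⁻¹, continuous_indicator (by simp [hV.frontier_eq]) hinv⟩, ?_⟩
  funext y
  by_cases hy : y ∈ V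
  · simp [hy, ha y hy]
  · simp [hy]

theorem exists_isIdempotentElem_mul_apply_eq_one [CompactSpace K] [T2Space K]
    [TotallyDisconnectedSpace K] {a : C(K, ℝ)} {k : K} (hk : a k ≠ 0) :
    ∃ b : C(K, ℝ), IsIdempotentElem (a * b) ∧ (a * b) k = 1 := by
  obtain ⟨V, hV, hkV, hVa⟩ :=
    compact_exists_isClopen_in_isOpen (isOpen_ne_fun a.continuous continuous_const) hk
  obtain ⟨b, hb⟩ := exists_mul_eq_indicator_of_isClopen hV hVa
  refine ⟨b, ?_, by simpa [hkV] using congr_fun hb k⟩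
  rw [IsIdempotentElem, ← DFunLike.coe_fn_eq, coe_mul, hb,
    ← inter_indicator_one, inter_self]

end ContinuousMap

namespace IsCarrier

variable {K X : Type*} [TopologicalSpace K] [CompactSpace K] [T2Space K]
    [NormedAddCommGroup X] [NormedSpace ℝ X] [CompleteSpace X]
    {m : C(K, ℝ) →ₐ[ℝ] (X →L[ℝ] X)} {x : X} {e : C(K, ℝ)}

theorem apply_eq_zero_of_isIdempotentElem (he : IsCarrier m x e) {p : C(K, ℝ)}
    (hp : IsIdempotentElem p) (hpx : m p x = 0) {k : K} (hk : p k = 1) : e k = 0 := by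
  have hle : e k ≤ 0 := by
    simpa [hk] using he.2.2 (1 - p) hp.one_sub (by simp [hpx]) k
  rcases IsIdempotentElem.iff_eq_zero_or_one.mp (ContinuousMap.congr_fun he.1 k) with h | h
  · exact h
  · linarith

theorem mul_eq_zero_of_map_apply_eq_zero [TotallyDisconnectedSpace K] (he : IsCarrier m x e)
    {a : C(K, ℝ)} (hax : m a x = 0) : a * e = 0 := by
  ext k
  by_cases hk : a k = 0
  · simp [hk]
  obtain ⟨b, hp, hpk⟩ := ContinuousMap.exists_isIdempotentElem_mul_apply_eq_one hk
  have hpx : m (a * b) x = 0 := by simp [mul_comm a b, hax]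
  simp [he.apply_eq_zero_of_isIdempotentElem hp hpx hpk]

end IsCarrier

theorem stmt4_general {K X : Type*} [TopologicalSpace K] [CompactSpace K] [T2Space K]
    [TotallyDisconnectedSpace K]
    [NormedAddCommGroup X] [NormedSpace ℝ X] [CompleteSpace X]
    (m : C(K, ℝ) →ₐ[ℝ] (X →L[ℝ] X))
    (x : X) (e : C(K, ℝ)) (he : IsCarrier m x e)
    (a : C(K, ℝ)) (hax : m a x = 0) :
    a * e = 0 :=
  he.mul_eq_zero_of_map_apply_eq_zero hax

theorem stmt4 {K X : Type*} [TopologicalSpace K] [CompactSpace K] [T2Space K]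
    [TotallyDisconnectedSpace K]
    [NormedAddCommGroup X] [NormedSpace ℝ X] [CompleteSpace X]
    (m : C(K, ℝ) →ₐ[ℝ] (X →L[ℝ] X))
    (hm : ∀ a : C(K, ℝ), ‖m a‖ = ‖a‖)
    (x : X) (e : C(K, ℝ)) (he : IsCarrier m x e)
    (a : C(K, ℝ)) (ha : 0 ≤ a) (hax : m a x = 0) :
    a * e = 0 :=
  stmt4_general m x e he a hax
end

section
/- Let X be a Veksler module over C(K) (K totally disconnected compact Hausdorff), i.e. every nonzero x ∈ X has a carrier projection e_x. Then for every nonzero x ∈ X, the compact space K_x (the clopen support of e_x) is quasi-Stonian (basically disconnected): the closure of every open F_σ (equivalently, cozero) set in K_x is open. -/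
open Set

namespace ContinuousMap

variable {K : Type*} [TopologicalSpace K]

theorem apply_eq_zero_or_one_of_mul_self {e : C(K, ℝ)} (he : e * e = e) (k : K) :
    e k = 0 ∨ e k = 1 :=
  IsIdempotentElem.iff_eq_zero_or_one.mp (ContinuousMap.congr_fun he k)

theorem isClopen_setOf_eq_one_of_mul_self {e : C(K, ℝ)} (he : e * e = e) :
    IsClopen {k | e k = 1} := by
  refine ⟨isClosed_eq e.continuous continuous_const, ?_⟩
  have : {k | e k = 1} = {k | e k = 0}ᶜ := by
    ext k
    rcases apply_eq_zero_or_one_of_mul_self he k with h | h <;> simp [h]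
  rw [this]
  exact (isClosed_eq e.continuous continuous_const).isOpen_compl

theorem exists_mul_self_eq_mul_of_apply_ne_zero [CompactSpace K] [T2Space K]
    [TotallyDisconnectedSpace K] {w : C(K, ℝ)} {k : K} (hk : w k ≠ 0) :
    ∃ g a : C(K, ℝ), g * g = g ∧ g k = 1 ∧ g = a * w := by
  obtain ⟨V, hV, hkV, hVw⟩ :=
    compact_exists_isClopen_in_isOpen (isOpen_ne_fun w.continuous continuous_const) hk
  set χ : C(K, ℝ) := (LocallyConstant.charFn ℝ hV).toContinuousMap
  have hχ : ∀ p, χ p = V.indicator 1 p := fun p => by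
    simp [χ, LocallyConstant.coe_charFn]
  have hχχ : χ * χ = χ := by
    ext p
    by_cases hp : p ∈ V <;> simp [hχ, hp]
  -- `w * w + (1 - χ)` vanishes nowhere, hence is a unit, and `χ * (w * w + (1 - χ)) = χ * w * w`.
  obtain ⟨h, hh⟩ : IsUnit (w * w + (1 - χ)) := by
    refine (isUnit_iff_forall_ne_zero _).mpr fun p => ?_
    by_cases hp : p ∈ V
    · simpa [hχ, hp] using hVw hp
    · have : 0 < w p * w p + 1 := add_pos_of_nonneg_of_pos (mul_self_nonneg _) one_pos
      simpa [hχ, hp] using this.ne'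
  refine ⟨χ, χ * w * ↑h⁻¹, hχχ, by simp [hχ, hkV], ?_⟩
  calc χ = χ * (w * w + (1 - χ)) * ↑h⁻¹ := by rw [← hh, mul_assoc, Units.mul_inv, mul_one]
    _ = χ * w * ↑h⁻¹ * w := by
      rw [mul_add, mul_sub, hχχ, mul_one, sub_self, add_zero]
      ring

theorem exists_setOf_ne_zero_eq_of_isGδ_compl [CompactSpace K] [T2Space K] {U : Set K}
    (hU : IsOpen U) (hUc : IsGδ Uᶜ) : ∃ u : C(K, ℝ), {k | u k ≠ 0} = U := by
  obtain ⟨f, hf, -⟩ := exists_continuous_one_zero_of_isCompact_of_isGδ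
    hU.isClosed_compl.isCompact hUc isClosed_empty (disjoint_empty _)
  refine ⟨1 - f, ?_⟩
  ext k
  rw [← compl_compl U, hf]
  simpa [sub_eq_zero] using ne_comm

end ContinuousMap

open ContinuousMap

section Carrier

variable {K X : Type*} [TopologicalSpace K] [CompactSpace K] [T2Space K]
    [NormedAddCommGroup X] [NormedSpace ℝ X] [CompleteSpace X]
    {m : C(K, ℝ) →ₐ[ℝ] (X →L[ℝ] X)} {x : X} {e : C(K, ℝ)}

theorem IsCarrier.apply_eq_zero_of_mul_self (he : IsCarrier m x e) {g : C(K, ℝ)}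
    (hg : g * g = g) (hgx : m g x = 0) {k : K} (hk : e k = 1) : g k = 0 := by
  have hle : e ≤ 1 - g := he.2.2 _ (IsIdempotentElem.one_sub hg) (by simp [hgx])
  have := hle k
  rcases apply_eq_zero_or_one_of_mul_self hg k with h | h
  · exact h
  · norm_num [hk, h] at this

theorem IsCarrier.apply_eq_zero [TotallyDisconnectedSpace K] (he : IsCarrier m x e)
    {w : C(K, ℝ)} (hw : m w x = 0) {k : K} (hk : e k = 1) : w k = 0 := by
  by_contra hwk
  obtain ⟨g, a, hg, hgk, rfl⟩ := exists_mul_self_eq_mul_of_apply_ne_zero hwk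
  have hgx : m (a * w) x = 0 := by rw [map_mul, mul_apply_eq_comp, hw, map_zero]
  simpa [hgk] using he.apply_eq_zero_of_mul_self hg hgx hk

theorem IsCarrier.closure_setOf_ne_zero_eq [TotallyDisconnectedSpace K] (he : IsCarrier m x e)
    {u f : C(K, ℝ)} (hf : IsCarrier m (m u x) f) (hu : ∀ k, u k ≠ 0 → e k = 1) :
    closure {k | u k ≠ 0} = {k | f k = 1} := by
  refine (closure_minimal ?_ (isClopen_setOf_eq_one_of_mul_self hf.1).isClosed).antisymm ?_
  · intro k hk
    rcases apply_eq_zero_or_one_of_mul_self hf.1 k with h | h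
    · have hw : m ((1 - f) * u) x = 0 := by
        rw [map_mul, mul_apply_eq_comp, map_sub, map_one, _root_.sub_apply, one_apply_eq_self,
          hf.2.1, sub_self]
      exact absurd (by simpa [h] using he.apply_eq_zero hw (hu k hk)) hk
    · exact h
  · intro k hk
    by_contra hkc
    obtain ⟨g, hg0, hg1, -⟩ := exists_continuous_zero_one_of_isClosed isClosed_closure
      isClosed_singleton (disjoint_singleton_right.mpr hkc)
    have hgu : g * u = 0 := by
      ext p
      by_cases hp : u p = 0
      · simp [hp]
      · simp [hg0 (subset_closure hp)]
    have hw : m g (m u x) = 0 := by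
      rw [← mul_apply_eq_comp, ← map_mul, hgu, map_zero, _root_.zero_apply]
    simpa [hg1 rfl] using hf.apply_eq_zero hw hk

theorem IsCarrier.isOpen_closure_setOf_ne_zero [TotallyDisconnectedSpace K]
    (hVeksler : ∀ z : X, z ≠ 0 → ∃ f : C(K, ℝ), IsCarrier m z f) (he : IsCarrier m x e)
    {u : C(K, ℝ)} (hu : ∀ k, u k ≠ 0 → e k = 1) : IsOpen (closure {k | u k ≠ 0}) := by
  by_cases hy : m u x = 0
  · have : {k | u k ≠ 0} = ∅ :=
      eq_empty_of_forall_notMem fun k hk => hk (he.apply_eq_zero hy (hu k hk))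
    simp [this]
  obtain ⟨f, hf⟩ := hVeksler _ hy
  rw [he.closure_setOf_ne_zero_eq hf hu]
  exact (isClopen_setOf_eq_one_of_mul_self hf.1).isOpen

end Carrier

theorem stmt5_general {K X : Type*} [TopologicalSpace K] [CompactSpace K] [T2Space K]
    [TotallyDisconnectedSpace K]
    [NormedAddCommGroup X] [NormedSpace ℝ X] [CompleteSpace X]
    (m : C(K, ℝ) →ₐ[ℝ] (X →L[ℝ] X))
    (hVeksler : ∀ z : X, z ≠ 0 → ∃ e : C(K, ℝ), IsCarrier m z e)
    (x : X) (e : C(K, ℝ)) (he : IsCarrier m x e) :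
    ∀ U : Set {k : K // e k = 1}, IsOpen U →
      (∃ F : ℕ → Set {k : K // e k = 1}, (∀ n, IsClosed (F n)) ∧ U = ⋃ n, F n) →
      IsOpen (closure U) := by
  rintro U hU ⟨F, hF, rfl⟩
  have hKx := isClopen_setOf_eq_one_of_mul_self he.1
  have himage_open : IsOpen (Subtype.val '' ⋃ n, F n) := hKx.isOpen.isOpenMap_subtype_val _ hU
  have himage_compl : IsGδ (Subtype.val '' ⋃ n, F n)ᶜ := by
    rw [image_iUnion, compl_iUnion]
    exact .iInter_of_isOpen fun n => (hKx.isClosed.isClosedMap_subtype_val _ (hF n)).isOpen_compl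
  obtain ⟨u, hu⟩ := exists_setOf_ne_zero_eq_of_isGδ_compl himage_open himage_compl
  have hsupp : ∀ k, u k ≠ 0 → e k = 1 := by
    intro k hk
    obtain ⟨p, -, rfl⟩ := hu.subset hk
    exact p.2
  rw [Topology.IsEmbedding.subtypeVal.closure_eq_preimage_closure_image, ← hu]
  exact (he.isOpen_closure_setOf_ne_zero hVeksler hsupp).preimage continuous_subtype_val

theorem stmt5 {K X : Type*} [TopologicalSpace K] [CompactSpace K] [T2Space K]
    [TotallyDisconnectedSpace K]
    [NormedAddCommGroup X] [NormedSpace ℝ X] [CompleteSpace X]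
    (m : C(K, ℝ) →ₐ[ℝ] (X →L[ℝ] X))
    (hm : ∀ a : C(K, ℝ), ‖m a‖ = ‖a‖)
    (hVeksler : ∀ z : X, z ≠ 0 → ∃ e : C(K, ℝ), IsCarrier m z e)
    (x : X) (hx : x ≠ 0) (e : C(K, ℝ)) (he : IsCarrier m x e) :
    ∀ U : Set {k : K // e k = 1}, IsOpen U →
      (∃ F : ℕ → Set {k : K // e k = 1}, (∀ n, IsClosed (F n)) ∧ U = ⋃ n, F n) →
      IsOpen (closure U) :=
  stmt5_general m hVeksler x e he
end

section
/- Let X be a Veksler module over C(K), x ∈ X nonzero with carrier projection e_x, and a ∈ C(K) supported in the clopen set K_x. Then the carrier projection (in e_x·C(K)) of the function a equals the carrier projection e_{m(a)x} of the element m(a)x; equivalently, for all b ∈ C(K_x): b·a = 0 if and only if b·e_{m(a)x} = 0. -/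
/-! The carrier `e` of `x` is faithful on `e·C(K)`: if `c·e = c` and `m c x = 0`, then `c = 0`.
Otherwise `c` is invertible on a clopen neighbourhood `U` of a point where it does not vanish,
so `m 1_U x = 0`, and `e·(1 - 1_U)` is a strictly smaller idempotent still fixing `x`.
Applied to the carriers of `x` and of `m a x`, faithfulness turns `b·a = 0` into
`m b (m a x) = 0` and back, and the latter into `b·e' = 0` and back. -/

open Filter Topology

theorem ContinuousMap.exists_mul_eq_idempotent_of_apply_ne_zero {K 𝕜 : Type*}
    [TopologicalSpace K] [CompactSpace K] [T2Space K] [TotallyDisconnectedSpace K]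
    [NormedField 𝕜] (c : C(K, 𝕜)) {t : K} (ht : c t ≠ 0) :
    ∃ χ d : C(K, 𝕜), IsIdempotentElem χ ∧ χ t = 1 ∧ d * c = χ := by
  obtain ⟨U, hU, htU, hUc⟩ :=
    compact_exists_isClopen_in_isOpen (isOpen_ne.preimage c.continuous) ht
  have hfrontier : ∀ s ∈ frontier U, (c s)⁻¹ = 0 := by simp [hU.frontier_eq]
  have hinv : ContinuousOn (fun s ↦ (c s)⁻¹) (closure U) := by
    rw [hU.isClosed.closure_eq]
    exact c.continuous.continuousOn.inv₀ fun s hs ↦ hUc hs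
  refine ⟨⟨U.indicator 1, hU.continuous_indicator continuous_const⟩,
    ⟨U.indicator fun s ↦ (c s)⁻¹, continuous_indicator hfrontier hinv⟩, ?_, ?_, ?_⟩
  · ext s
    by_cases hs : s ∈ U <;> simp [hs]
  · simp [htU]
  · ext s
    by_cases hs : s ∈ U
    · simp [hs, inv_mul_cancel₀ (hUc hs)]
    · simp [hs]

namespace IsCarrier

variable {K X : Type*} [TopologicalSpace K] [CompactSpace K] [T2Space K]
    [NormedAddCommGroup X] [NormedSpace ℝ X] [CompleteSpace X]
    {m : C(K, ℝ) →ₐ[ℝ] (X →L[ℝ] X)} {x : X} {e : C(K, ℝ)}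

theorem mul_eq_zero_of_isIdempotentElem (he : IsCarrier m x e) {χ : C(K, ℝ)}
    (hχ : IsIdempotentElem χ) (hχx : m χ x = 0) : e * χ = 0 := by
  have he_idem : IsIdempotentElem e := he.1
  have hidem : IsIdempotentElem (e * (1 - χ)) := he_idem.mul hχ.one_sub
  have hfix : m (e * (1 - χ)) x = x := by simp [hχx, he.2.1]
  ext t
  have hle : e t ≤ (e * (1 - χ)) t := he.2.2 _ hidem hfix t
  have hidem_t := congrArg (fun f : C(K, ℝ) ↦ f t) (he_idem.mul hχ)
  simp only [ContinuousMap.mul_apply, ContinuousMap.sub_apply, ContinuousMap.one_apply]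
    at hle hidem_t
  simp only [ContinuousMap.mul_apply, ContinuousMap.zero_apply]
  nlinarith

theorem eq_zero_of_apply_eq_zero [TotallyDisconnectedSpace K] (he : IsCarrier m x e)
    {c : C(K, ℝ)} (hce : c * e = c) (hcx : m c x = 0) : c = 0 := by
  by_contra hc
  obtain ⟨t, ht⟩ := DFunLike.ne_iff.mp hc
  obtain ⟨χ, d, hχ, hχt, hdc⟩ := c.exists_mul_eq_idempotent_of_apply_ne_zero ht
  have het : e t = 1 := by
    have hce_t : c t * e t = c t * 1 := by simpa using congrArg (fun f : C(K, ℝ) ↦ f t) hce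
    exact mul_left_cancel₀ ht hce_t
  have hχx : m χ x = 0 := by
    rw [← hdc, map_mul, mul_apply_eq_comp, hcx, map_zero]
  have := congrArg (fun f : C(K, ℝ) ↦ f t) (he.mul_eq_zero_of_isIdempotentElem hχ hχx)
  simp [het, hχt] at this

end IsCarrier

theorem stmt6_general {K X : Type*} [TopologicalSpace K] [CompactSpace K] [T2Space K]
    [TotallyDisconnectedSpace K]
    [NormedAddCommGroup X] [NormedSpace ℝ X] [CompleteSpace X]
    (m : C(K, ℝ) →ₐ[ℝ] (X →L[ℝ] X))
    (x : X) (e : C(K, ℝ)) (he : IsCarrier m x e)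
    (a : C(K, ℝ)) (ha : a * e = a)
    (e' : C(K, ℝ)) (he' : IsCarrier m (m a x) e') :
    ∀ b : C(K, ℝ), b * e = b → (b * a = 0 ↔ b * e' = 0) := by
  intro b _
  have hbax : m b (m a x) = m (b * a) x := by rw [map_mul, mul_apply_eq_comp]
  have hbe'ax : m b (m a x) = m (b * e') (m a x) := by
    rw [map_mul, mul_apply_eq_comp, he'.2.1]
  constructor
  · intro hba
    refine he'.eq_zero_of_apply_eq_zero (by rw [mul_assoc, he'.1]) ?_
    rw [← hbe'ax, hbax, hba, map_zero, zero_apply]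
  · intro hbe'
    refine he.eq_zero_of_apply_eq_zero (by rw [mul_assoc, ha]) ?_
    rw [← hbax, hbe'ax, hbe', map_zero, zero_apply]

theorem stmt6 {K X : Type*} [TopologicalSpace K] [CompactSpace K] [T2Space K]
    [TotallyDisconnectedSpace K]
    [NormedAddCommGroup X] [NormedSpace ℝ X] [CompleteSpace X]
    (m : C(K, ℝ) →ₐ[ℝ] (X →L[ℝ] X))
    (hm : ∀ a : C(K, ℝ), ‖m a‖ = ‖a‖)
    (hVeksler : ∀ z : X, z ≠ 0 → ∃ e : C(K, ℝ), IsCarrier m z e)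
    (x : X) (hx : x ≠ 0) (e : C(K, ℝ)) (he : IsCarrier m x e)
    (a : C(K, ℝ)) (ha : a * e = a)
    (e' : C(K, ℝ)) (he' : IsCarrier m (m a x) e') :
    ∀ b : C(K, ℝ), b * e = b → (b * a = 0 ↔ b * e' = 0) :=
  stmt6_general m x e he a ha e' he'
end

section
/- Let X be a cyclic Veksler module over C(K) with cyclic vector x₀. If sequences x_n → x and y_n → y in norm in X and the carrier projections satisfy e_{x_n}·e_{y_n} = 0 for each n, then e_x·e_y = 0. -/
open Filter Topology

/-!
Write `q n` for the carrier of `xs n`. Contractivity of `m` on idempotents gives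
`m (q n) x → x`, and `m (q n) y → 0` because `q n` annihilates `ys n`. Along a fast subsequence,
the partial products `t j` of the `q`'s move `x` by a summable amount, so `m (t j) x` converges
to some `z` as close to `x` as we like and fixed by every `t j`. The carrier `r` of `z` lies below
every `t j`, hence `m r y = 0`, hence `r` is disjoint from the carrier `e_y` of `y` and
`m e_y z = 0`. Letting `z → x` gives `m e_y x = 0`, and minimality of `e_x` then forces
`e_x * e_y = 0`.
-/

namespace IsIdempotentElem

lemma finset_prod {ι M : Type*} [CommMonoid M] {s : Finset ι} {f : ι → M}
    (h : ∀ i ∈ s, IsIdempotentElem (f i)) : IsIdempotentElem (∏ i ∈ s, f i) :=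
  Finset.prod_induction _ _ (fun _ _ => IsIdempotentElem.mul) IsIdempotentElem.one h

variable {K : Type*} [TopologicalSpace K] {e f : C(K, ℝ)}

lemma apply_eq_zero_or_one (he : IsIdempotentElem e) (k : K) : e k = 0 ∨ e k = 1 :=
  iff_eq_zero_or_one.mp (show e k * e k = e k by simpa using DFunLike.congr_fun he k)

lemma norm_le_one [CompactSpace K] (he : IsIdempotentElem e) : ‖e‖ ≤ 1 :=
  (ContinuousMap.norm_le _ zero_le_one).mpr fun k => by
    rcases he.apply_eq_zero_or_one k with h | h <;> simp [h]

lemma mul_eq_left_of_le (he : IsIdempotentElem e) (hf : IsIdempotentElem f) (h : e ≤ f) :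
    e * f = e := by
  ext k
  have hk : e k ≤ f k := h k
  rcases he.apply_eq_zero_or_one k with h0 | h1
  · simp [h0]
  · rcases hf.apply_eq_zero_or_one k with g0 | g1
    · linarith
    · simp [h1, g1]

end IsIdempotentElem

section Contractive

variable {K X : Type*} [TopologicalSpace K] [CompactSpace K]
    [NormedAddCommGroup X] [NormedSpace ℝ X]
    {m : C(K, ℝ) →ₐ[ℝ] (X →L[ℝ] X)}

lemma norm_apply_le_of_isIdempotentElem (hm : ∀ a, ‖m a‖ ≤ ‖a‖) {e : C(K, ℝ)}
    (he : IsIdempotentElem e) (z : X) : ‖m e z‖ ≤ ‖z‖ :=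
  calc ‖m e z‖ ≤ ‖m e‖ * ‖z‖ := (m e).le_opNorm z
    _ ≤ 1 * ‖z‖ := by gcongr; exact (hm e).trans he.norm_le_one
    _ = ‖z‖ := one_mul _

lemma tendsto_apply_sub_apply (hm : ∀ a, ‖m a‖ ≤ ‖a‖) {q : ℕ → C(K, ℝ)}
    (hq : ∀ n, IsIdempotentElem (q n)) {u : ℕ → X} {v : X} (hu : Tendsto u atTop (𝓝 v)) :
    Tendsto (fun n => m (q n) v - m (q n) (u n)) atTop (𝓝 0) := by
  refine squeeze_zero_norm (fun n => ?_) (tendsto_iff_norm_sub_tendsto_zero.mp hu)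
  rw [← map_sub, norm_sub_rev]
  exact norm_apply_le_of_isIdempotentElem hm (hq n) _

lemma exists_dist_le_forall_prod_apply_eq [CompleteSpace X] (hm : ∀ a, ‖m a‖ ≤ ‖a‖)
    {p : ℕ → C(K, ℝ)} (hp : ∀ j, IsIdempotentElem (p j)) {x : X} {δ : ℝ}
    (hpx : ∀ j, dist x (m (p j) x) ≤ δ / 2 / 2 ^ j) :
    ∃ z, dist x z ≤ δ ∧ ∀ j, m (∏ i ∈ Finset.range j, p i) z = z := by
  let t : ℕ → C(K, ℝ) := fun j => ∏ i ∈ Finset.range j, p i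
  have ht : ∀ j, IsIdempotentElem (t j) := fun j =>
    IsIdempotentElem.finset_prod fun i _ => hp i
  have hdist : ∀ j, dist (m (t j) x) (m (t (j + 1)) x) ≤ δ / 2 / 2 ^ j := fun j => by
    rw [show t (j + 1) = t j * p j from Finset.prod_range_succ p j, map_mul, mul_apply_eq_comp,
      dist_eq_norm, ← map_sub]
    exact (norm_apply_le_of_isIdempotentElem hm (ht j) _).trans (dist_eq_norm x _ ▸ hpx j)
  obtain ⟨z, hz⟩ := cauchySeq_tendsto_of_complete (cauchySeq_of_le_geometric_two hdist)
  refine ⟨z, by simpa [t] using dist_le_of_le_geometric_two_of_tendsto₀ hdist hz, fun j => ?_⟩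
  have hfix : ∀ l ≥ j, m (t l) x = m (t j) (m (t l) x) := fun l hl => by
    have htl : t l = t j * ∏ i ∈ Finset.Ico j l, p i :=
      (Finset.prod_range_mul_prod_Ico p hl).symm
    rw [← mul_apply_eq_comp, ← map_mul, htl, ← mul_assoc, ht j]
  exact tendsto_nhds_unique (((m (t j)).continuous.tendsto z).comp hz)
    (hz.congr' (eventually_atTop.mpr ⟨j, hfix⟩))

end Contractive

namespace IsCarrier

variable {K X : Type*} [TopologicalSpace K] [CompactSpace K] [T2Space K]
    [NormedAddCommGroup X] [NormedSpace ℝ X] [CompleteSpace X]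
    {m : C(K, ℝ) →ₐ[ℝ] (X →L[ℝ] X)} {x y z : X} {e r : C(K, ℝ)}

lemma mul_eq_left_of_apply_eq_self (hx : IsCarrier m x e) (hr : IsIdempotentElem r)
    (hrx : m r x = x) : e * r = e :=
  IsIdempotentElem.mul_eq_left_of_le hx.1 hr (hx.2.2 r hr hrx)

lemma mul_eq_zero_of_apply_eq_zero (hx : IsCarrier m x e) (hr : IsIdempotentElem r)
    (hrx : m r x = 0) : e * r = 0 := by
  have hfix : m (e * (1 - r)) x = x := by simp [hrx, hx.2.1]
  have h := hx.mul_eq_left_of_apply_eq_self (IsIdempotentElem.mul hx.1 hr.one_sub) hfix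
  rwa [← mul_assoc, hx.1, mul_sub, mul_one, sub_eq_self] at h

lemma apply_eq_zero_of_forall_apply_eq_self (hm : ∀ a, ‖m a‖ ≤ ‖a‖)
    (hV : ∀ z : X, z ≠ 0 → ∃ e, IsCarrier m z e) (hy : IsCarrier m y e) {t : ℕ → C(K, ℝ)}
    (ht : ∀ j, IsIdempotentElem (t j)) (htz : ∀ j, m (t j) z = z)
    (hty : Tendsto (fun j => m (t j) y) atTop (𝓝 0)) : m e z = 0 := by
  rcases eq_or_ne z 0 with rfl | hz
  · exact map_zero _
  obtain ⟨r, hr⟩ := hV z hz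
  have hry : m r y = 0 := by
    refine norm_le_zero_iff.mp (ge_of_tendsto' (by simpa using hty.norm) fun j => ?_)
    rw [← hr.mul_eq_left_of_apply_eq_self (ht j) (htz j), map_mul, mul_apply_eq_comp]
    exact norm_apply_le_of_isIdempotentElem hm hr.1 _
  rw [← hr.2.1, ← mul_apply_eq_comp, ← map_mul,
    hy.mul_eq_zero_of_apply_eq_zero hr.1 hry, map_zero, zero_apply]

lemma apply_eq_zero_of_tendsto (hm : ∀ a, ‖m a‖ ≤ ‖a‖)
    (hV : ∀ z : X, z ≠ 0 → ∃ e, IsCarrier m z e) (hy : IsCarrier m y e) {q : ℕ → C(K, ℝ)}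
    (hq : ∀ n, IsIdempotentElem (q n)) (hqx : Tendsto (fun n => m (q n) x) atTop (𝓝 x))
    (hqy : Tendsto (fun n => m (q n) y) atTop (𝓝 0)) : m e x = 0 := by
  suffices x ∈ closure {z | m e z = 0} by
    rwa [(isClosed_eq (m e).continuous continuous_const).closure_eq] at this
  refine Metric.mem_closure_iff.mpr fun ε hε => ?_
  obtain ⟨φ, hφ, hφx⟩ := extraction_forall_of_eventually fun j =>
    hqx.eventually (Metric.closedBall_mem_nhds x (by positivity : 0 < ε / 2 / 2 / 2 ^ j))
  obtain ⟨z, hxz, hz⟩ := exists_dist_le_forall_prod_apply_eq hm (fun j => hq (φ j))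
    (x := x) (δ := ε / 2) fun j => by rw [dist_comm]; exact hφx j
  refine ⟨z, ?_, by linarith⟩
  refine hy.apply_eq_zero_of_forall_apply_eq_self hm hV
    (fun j => IsIdempotentElem.finset_prod fun i _ => hq (φ i)) hz ?_
  rw [← tendsto_add_atTop_iff_nat 1]
  refine squeeze_zero_norm (fun j => ?_) (by simpa using (hqy.comp hφ.tendsto_atTop).norm)
  rw [Finset.prod_range_succ, map_mul, mul_apply_eq_comp]
  exact norm_apply_le_of_isIdempotentElem hm
    (IsIdempotentElem.finset_prod fun i _ => hq (φ i)) _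

end IsCarrier

theorem stmt7_general {K X : Type*} [TopologicalSpace K] [CompactSpace K] [T2Space K]
    [NormedAddCommGroup X] [NormedSpace ℝ X] [CompleteSpace X]
    (m : C(K, ℝ) →ₐ[ℝ] (X →L[ℝ] X))
    (hm : ∀ a : C(K, ℝ), ‖m a‖ = ‖a‖)
    (hVeksler : ∀ z : X, z ≠ 0 → ∃ e : C(K, ℝ), IsCarrier m z e)
    (x y : X) (xs ys : ℕ → X)
    (hx : Filter.Tendsto xs Filter.atTop (nhds x))
    (hy : Filter.Tendsto ys Filter.atTop (nhds y))
    (ex ey : C(K, ℝ)) (hex : IsCarrier m x ex) (hey : IsCarrier m y ey)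
    (exs eys : ℕ → C(K, ℝ))
    (hexs : ∀ n, IsCarrier m (xs n) (exs n)) (heys : ∀ n, IsCarrier m (ys n) (eys n))
    (hdisj : ∀ n, exs n * eys n = 0) :
    ex * ey = 0 := by
  have hcontr : ∀ a, ‖m a‖ ≤ ‖a‖ := fun a => (hm a).le
  have hq : ∀ n, IsIdempotentElem (exs n) := fun n => (hexs n).1
  have hqx : Tendsto (fun n => m (exs n) x) atTop (𝓝 x) := by
    have h := (tendsto_apply_sub_apply hcontr hq hx).add hx
    rw [zero_add] at h
    exact h.congr fun n => by rw [(hexs n).2.1, sub_add_cancel]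
  have hqy : Tendsto (fun n => m (exs n) y) atTop (𝓝 0) := by
    refine (tendsto_apply_sub_apply hcontr hq hy).congr fun n => ?_
    rw [← (heys n).2.1, ← mul_apply_eq_comp, ← map_mul, hdisj n, map_zero,
      zero_apply, sub_zero]
  exact hex.mul_eq_zero_of_apply_eq_zero hey.1
    (hey.apply_eq_zero_of_tendsto hcontr hVeksler hq hqx hqy)

theorem stmt7 {K X : Type*} [TopologicalSpace K] [CompactSpace K] [T2Space K]
    [TotallyDisconnectedSpace K]
    [NormedAddCommGroup X] [NormedSpace ℝ X] [CompleteSpace X]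
    (m : C(K, ℝ) →ₐ[ℝ] (X →L[ℝ] X))
    (hm : ∀ a : C(K, ℝ), ‖m a‖ = ‖a‖)
    (x₀ : X) (hcyc : DenseRange fun a : C(K, ℝ) => m a x₀)
    (hVeksler : ∀ z : X, z ≠ 0 → ∃ e : C(K, ℝ), IsCarrier m z e)
    (x y : X) (xs ys : ℕ → X)
    (hx : Filter.Tendsto xs Filter.atTop (nhds x))
    (hy : Filter.Tendsto ys Filter.atTop (nhds y))
    (ex ey : C(K, ℝ)) (hex : IsCarrier m x ex) (hey : IsCarrier m y ey)
    (exs eys : ℕ → C(K, ℝ))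
    (hexs : ∀ n, IsCarrier m (xs n) (exs n)) (heys : ∀ n, IsCarrier m (ys n) (eys n))
    (hdisj : ∀ n, exs n * eys n = 0) :
    ex * ey = 0 :=
  stmt7_general m hm hVeksler x y xs ys hx hy ex ey hex hey exs eys hexs heys hdisj
end

section
/- Every Kaplansky module over C(K) is a Veksler module: every nonzero element x admits a carrier projection e_x, the smallest idempotent e in C(K) with m(e)x = x. -/
/-!
The annihilator of `x` is an ideal `I` of `C(K, ℝ)`. Since `K` is extremally disconnected, the
closure of the open set where some element of `I` does not vanish is clopen, and its indicator `b`
is the supremum of the elements of `I` with values in `[0, 1]`. The Kaplansky condition puts `b`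
in `I`, and `1 - b` is the carrier projection of `x`: an idempotent `f` fixes `x` exactly when
`1 - f ∈ I`, and then `1 - f ≤ b`.
-/

open Filter Topology

/-- Kaplansky condition (2): for any `x` and any bounded-above nonempty family of
nonnegative functions annihilating `x`, the supremum of the family also annihilates `x`. -/
def IsKaplansky {K X : Type*} [TopologicalSpace K] [CompactSpace K] [T2Space K]
    [NormedAddCommGroup X] [NormedSpace ℝ X] [CompleteSpace X]
    (m : C(K, ℝ) →ₐ[ℝ] (X →L[ℝ] X)) : Prop :=
  ∀ (x : X) (A : Set C(K, ℝ)), (∀ a ∈ A, 0 ≤ a) → A.Nonempty → BddAbove A →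
    ∀ b : C(K, ℝ), IsLUB A b → (∀ a ∈ A, m a x = 0) → m b x = 0

open ContinuousMap

section Annihilator

variable {F R 𝕜 X : Type*} [CommSemiring R] [Semiring 𝕜] [TopologicalSpace X] [AddCommMonoid X]
  [Module 𝕜 X] [ContinuousAdd X] [FunLike F R (X →L[𝕜] X)] [RingHomClass F R (X →L[𝕜] X)]

def annihilatorIdeal (m : F) (x : X) : Ideal R where
  carrier := {a | m a x = 0}
  add_mem' {a b} ha hb := by simp_all
  zero_mem' := by simp
  smul_mem' c a ha := by simp_all

@[simp]
theorem mem_annihilatorIdeal {m : F} {x : X} {a : R} : a ∈ annihilatorIdeal m x ↔ m a x = 0 :=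
  Iff.rfl

end Annihilator

theorem IsOpen.isClopen_closure {X : Type*} [TopologicalSpace X] [ExtremallyDisconnected X]
    {U : Set X} (hU : IsOpen U) : IsClopen (closure U) :=
  ⟨isClosed_closure, ExtremallyDisconnected.open_closure U hU⟩

section Ideals

variable {K : Type*} [TopologicalSpace K]

theorem exists_mem_ideal_nonneg_le_one_eq_one {I : Ideal C(K, ℝ)} {f : C(K, ℝ)} (hf : f ∈ I)
    {s : K} (hs : f s ≠ 0) : ∃ p ∈ I, 0 ≤ p ∧ p ≤ 1 ∧ p s = 1 := by
  have hc : 0 < f s * f s := mul_self_pos.mpr hs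
  have hpos (z : K) : 0 < max (f z * f z) (f s * f s) := lt_max_of_lt_right hc
  -- `g * (f * f) = f² / max (f², f(s)²)` takes values in `[0, 1]` and equals `1` at `s`.
  let g : C(K, ℝ) := ⟨fun z => (max (f z * f z) (f s * f s))⁻¹,
    ((f.continuous.mul f.continuous).max continuous_const).inv₀ fun z => (hpos z).ne'⟩
  refine ⟨g * (f * f), I.mul_mem_left g (I.mul_mem_left f hf), fun z => ?_, fun z => ?_, ?_⟩
  · exact mul_nonneg (inv_nonneg.mpr (hpos z).le) (mul_self_nonneg _)
  · exact inv_mul_le_one_of_le₀ (le_max_left _ _) (hpos z).le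
  · simp only [mul_apply, g, coe_mk, max_self]
    exact inv_mul_cancel₀ hc.ne'

variable [ExtremallyDisconnected K]

theorem isLUB_charFn_closure_setOfIdeal (I : Ideal C(K, ℝ)) :
    IsLUB {a | a ∈ I ∧ 0 ≤ a ∧ a ≤ 1}
      (LocallyConstant.charFn ℝ (setOfIdeal_open I).isClopen_closure : C(K, ℝ)) := by
  refine ⟨fun a ⟨haI, _, ha1⟩ t => ?_, fun c hc t => ?_⟩
  · by_cases ht : t ∈ closure (setOfIdeal I)
    · simpa [LocallyConstant.coe_charFn, ht] using ha1 t
    · have : t ∉ setOfIdeal I := fun h => ht (subset_closure h)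
      simp [LocallyConstant.coe_charFn, ht, notMem_setOfIdeal.mp this haI]
  · by_cases ht : t ∈ closure (setOfIdeal I)
    · have hU : setOfIdeal I ⊆ {s | 1 ≤ c s} := fun s hs => by
        obtain ⟨f, hfI, hfs⟩ := mem_setOfIdeal.mp hs
        obtain ⟨p, hpI, hp0, hp1, hps⟩ := exists_mem_ideal_nonneg_le_one_eq_one hfI hfs
        exact hps ▸ hc ⟨hpI, hp0, hp1⟩ s
      simpa [LocallyConstant.coe_charFn, ht] using
        closure_minimal hU (isClosed_le continuous_const c.continuous) ht
    · simpa [LocallyConstant.coe_charFn, ht] using hc ⟨I.zero_mem, le_rfl, zero_le_one⟩ t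

end Ideals

theorem stmt11_general {K X : Type*} [TopologicalSpace K] [CompactSpace K] [T2Space K]
    [ExtremallyDisconnected K]
    [NormedAddCommGroup X] [NormedSpace ℝ X] [CompleteSpace X]
    (m : C(K, ℝ) →ₐ[ℝ] (X →L[ℝ] X))
    (hKap : IsKaplansky m) :
    ∀ x : X, x ≠ 0 → ∃ e : C(K, ℝ), IsCarrier m x e := by
  intro x _
  set I := annihilatorIdeal m x
  set b : C(K, ℝ) := ↑(LocallyConstant.charFn ℝ (setOfIdeal_open I).isClopen_closure)
  set A := {a | a ∈ I ∧ 0 ≤ a ∧ a ≤ 1}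
  have hlub : IsLUB A b := isLUB_charFn_closure_setOfIdeal I
  have hbI : m b x = 0 := hKap x A (fun a ha => ha.2.1) ⟨0, I.zero_mem, le_rfl, zero_le_one⟩
    ⟨1, fun a ha => ha.2.2⟩ b hlub (fun a ha => ha.1)
  have hb : IsIdempotentElem b := by
    ext t
    by_cases ht : t ∈ closure (setOfIdeal I) <;> simp [b, LocallyConstant.coe_charFn, ht]
  refine ⟨1 - b, hb.one_sub, by simp [hbI], fun f hf hfx => ?_⟩
  -- The star on `C(K, ℝ)` is trivial, so idempotents are star projections, hence lie in `[0, 1]`.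
  have hf' : IsStarProjection (1 - f) := ⟨IsIdempotentElem.one_sub hf, .all _⟩
  exact sub_le_comm.mp (hlub.1 ⟨by simp [I, hfx], hf'.nonneg, hf'.le_one⟩)

/-- Every Kaplansky module is a Veksler module. -/
theorem stmt11 {K X : Type*} [TopologicalSpace K] [CompactSpace K] [T2Space K]
    [ExtremallyDisconnected K]
    [NormedAddCommGroup X] [NormedSpace ℝ X] [CompleteSpace X]
    (m : C(K, ℝ) →ₐ[ℝ] (X →L[ℝ] X))
    (hm : ∀ a : C(K, ℝ), ‖m a‖ = ‖a‖)
    (hKap : IsKaplansky m) :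
    ∀ x : X, x ≠ 0 → ∃ e : C(K, ℝ), IsCarrier m x e :=
  stmt11_general m hKap
end

section
/- Containing no closed subspace isomorphic to ℓ∞ is a three-space property: if Y is a closed subspace of a Banach space X such that neither Y nor the quotient X/Y contains a closed subspace isomorphic to ℓ∞, then X contains no closed subspace isomorphic to ℓ∞. -/
open Filter Topology

/-- A Banach space `E` contains a copy of `ℓ∞` if there is a continuous linear embedding
of `ℓ∞` into `E` which is bounded below (hence an isomorphism onto its closed range). -/
def ContainsLinfty (E : Type*) [NormedAddCommGroup E] [NormedSpace ℝ E] : Prop :=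
  ∃ T : lp (fun _ : ℕ => ℝ) ⊤ →L[ℝ] E, ∃ c > (0 : ℝ),
    ∀ f : lp (fun _ : ℕ => ℝ) ⊤, c * ‖f‖ ≤ ‖T f‖

/-!
Let `T : ℓ∞ → X` be an embedding and `q : X → X ⧸ Y` the quotient map. If `‖q (T eⱼ)‖ ≥ δ > 0`
for infinitely many unit vectors `eⱼ`, Rosenthal's theorem (an operator on `ℓ∞` bounded below
on the indicators of infinitely many disjoint sets fixes a copy of `ℓ∞`; it rests on Rosenthal's
disjointness lemma for bounded finitely additive set functions) embeds `ℓ∞` into `X ⧸ Y`.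
Otherwise a subsequence of the `T eⱼ` lies summably close to `Y`, and a small perturbation of
`T` is an embedding `V` sending every unit vector into `Y`.

Now take the uncountable almost disjoint family of sets of prefixes of branches `x : ℕ → Bool`.
If `q ∘ V` kills the indicators of all subsets of one of them, it kills `ℓ∞` of that set (the
indicators span a dense subspace), so `V` embeds `ℓ∞` into `Y`. Otherwise every branch carries
a set `Cₓ` with `q (V 1_{Cₓ}) ≠ 0`; infinitely many have norm `≥ ε`, and since `q ∘ V` kills
finite sets they can be disjointified without changing these values, so Rosenthal's theorem
embeds `ℓ∞` into `X ⧸ Y`.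
-/

noncomputable section

open Set Function
open scoped lp ENNReal

namespace Linfty

def ofBounded (f : ℕ → ℝ) (C : ℝ) (h : ∀ n, |f n| ≤ C) : ℓ^∞(ℕ, ℝ) :=
  ⟨f, memℓp_infty ⟨C, by rintro _ ⟨n, rfl⟩; simpa using h n⟩⟩

@[simp] lemma coe_ofBounded (f : ℕ → ℝ) (C : ℝ) (h : ∀ n, |f n| ≤ C) :
    ⇑(ofBounded f C h) = f := rfl

lemma abs_apply_le_norm (a : ℓ^∞(ℕ, ℝ)) (n : ℕ) : |a n| ≤ ‖a‖ :=
  lp.norm_apply_le_norm ENNReal.top_ne_zero a n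

lemma norm_le_of_forall_abs_le (a : ℓ^∞(ℕ, ℝ)) {C : ℝ} (hC : 0 ≤ C) (h : ∀ n, |a n| ≤ C) :
    ‖a‖ ≤ C :=
  lp.norm_le_of_forall_le hC h

lemma norm_ofBounded_le (f : ℕ → ℝ) (C : ℝ) (h : ∀ n, |f n| ≤ C) : ‖ofBounded f C h‖ ≤ C :=
  norm_le_of_forall_abs_le _ ((abs_nonneg _).trans (h 0)) h

lemma exists_lt_abs_apply {a : ℓ^∞(ℕ, ℝ)} (ha : a ≠ 0) {t : ℝ} (ht : t < 1) :
    ∃ n, t * ‖a‖ < |a n| := by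
  by_contra! h
  have hpos : 0 < ‖a‖ := norm_pos_iff.mpr ha
  have := norm_le_of_forall_abs_le a (by nlinarith [abs_nonneg (a 0), h 0]) h
  nlinarith

def indicator (E : Set ℕ) : ℓ^∞(ℕ, ℝ) :=
  ofBounded (E.indicator 1) 1 fun n => by
    by_cases hn : n ∈ E <;> simp [hn]

@[simp] lemma coe_indicator (E : Set ℕ) : ⇑(indicator E) = E.indicator 1 := rfl

lemma norm_indicator_le (E : Set ℕ) : ‖indicator E‖ ≤ 1 := norm_ofBounded_le _ _ _

lemma indicator_empty : indicator ∅ = 0 := lp.ext <| by simp; rfl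

lemma indicator_union_of_disjoint {E F : Set ℕ} (h : Disjoint E F) :
    indicator (E ∪ F) = indicator E + indicator F :=
  lp.ext <| by simp [Set.indicator_union_of_disjoint h]; rfl

lemma coe_indicator_mul (E : Set ℕ) (a : ℓ^∞(ℕ, ℝ)) :
    ⇑(indicator E * a) = E.indicator a := by
  ext n
  by_cases hn : n ∈ E <;> simp [lp.infty_coeFn_mul, hn]

lemma map_indicator_eq_zero_of_finite {Z : Type*} [NormedAddCommGroup Z] [NormedSpace ℝ Z]
    (W : ℓ^∞(ℕ, ℝ) →L[ℝ] Z) (hW : ∀ j, W (indicator {j}) = 0) {E : Set ℕ} (hE : E.Finite) :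
    W (indicator E) = 0 := by
  induction E, hE using Set.Finite.induction_on with
  | empty => rw [indicator_empty, map_zero]
  | @insert j E hj _ ih =>
    rw [Set.insert_eq, indicator_union_of_disjoint (disjoint_singleton_left.mpr hj), map_add,
      hW, ih, add_zero]

lemma exists_finite_range_norm_sub_le (a : ℓ^∞(ℕ, ℝ)) {ε : ℝ} (hε : 0 < ε) :
    ∃ s : ℓ^∞(ℕ, ℝ), (range s).Finite ∧ ‖a - s‖ ≤ ε := by
  have floor_le (x : ℝ) : ε * ⌊x / ε⌋ ≤ x := by
    have := Int.floor_le (x / ε); rwa [le_div_iff₀ hε, mul_comm] at this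
  have lt_floor (x : ℝ) : x < ε * ⌊x / ε⌋ + ε := by
    have := Int.lt_floor_add_one (x / ε); rwa [div_lt_iff₀ hε, add_mul, one_mul, mul_comm] at this
  have bound (n : ℕ) : |ε * ⌊a n / ε⌋| ≤ ‖a‖ + ε := by
    have := abs_le.mp (abs_apply_le_norm a n)
    have := floor_le (a n); have := lt_floor (a n)
    exact abs_le.mpr ⟨by linarith, by linarith⟩
  refine ⟨ofBounded (fun n => ε * ⌊a n / ε⌋) _ bound, ?_, ?_⟩
  · refine ((Set.finite_Icc ⌊-‖a‖ / ε⌋ ⌊‖a‖ / ε⌋).image fun v : ℤ => ε * v).subset ?_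
    rintro _ ⟨n, rfl⟩
    have := abs_le.mp (abs_apply_le_norm a n)
    exact ⟨_, ⟨Int.floor_mono (by gcongr; linarith), Int.floor_mono (by gcongr; linarith)⟩, rfl⟩
  · refine norm_le_of_forall_abs_le _ hε.le fun n => ?_
    have := floor_le (a n); have := lt_floor (a n)
    simp only [lp.coeFn_sub, Pi.sub_apply, coe_ofBounded]
    exact abs_le.mpr ⟨by linarith, by linarith⟩

lemma eq_sum_indicator_of_finite_range {s : ℓ^∞(ℕ, ℝ)} (hs : (range s).Finite) :
    s = ∑ v ∈ hs.toFinset, v • indicator (s ⁻¹' {v}) := by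
  refine lp.ext (funext fun n => ?_)
  rw [lp.coeFn_sum, Finset.sum_apply, Finset.sum_eq_single (s n)]
  · simp
  · intro v _ hv
    simp [Set.indicator_of_notMem (show n ∉ s ⁻¹' {v} from Ne.symm hv)]
  · simp

lemma dense_span_range_indicator :
    Dense (Submodule.span ℝ (range indicator) : Set ℓ^∞(ℕ, ℝ)) := by
  refine Metric.dense_iff.mpr fun a r hr => ?_
  obtain ⟨s, hs, has⟩ := exists_finite_range_norm_sub_le a (half_pos hr)
  refine ⟨s, ?_, ?_⟩
  · rw [Metric.mem_ball, dist_comm, dist_eq_norm]; linarith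
  · rw [SetLike.mem_coe, eq_sum_indicator_of_finite_range hs]
    exact Submodule.sum_mem _ fun v _ => Submodule.smul_mem _ _ (Submodule.subset_span ⟨_, rfl⟩)

lemma map_mem_of_map_indicator_mem {X : Type*} [NormedAddCommGroup X] [NormedSpace ℝ X]
    (W : ℓ^∞(ℕ, ℝ) →L[ℝ] X) {Y : Submodule ℝ X} (hY : IsClosed (Y : Set X))
    (hW : ∀ E, W (indicator E) ∈ Y) (a : ℓ^∞(ℕ, ℝ)) : W a ∈ Y := by
  have hspan : Submodule.span ℝ (range indicator) ≤ Y.comap W.toLinearMap :=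
    Submodule.span_le.mpr <| by rintro _ ⟨E, rfl⟩; exact hW E
  have hclosed : IsClosed (Y.comap W.toLinearMap : Set ℓ^∞(ℕ, ℝ)) := hY.preimage W.continuous
  exact hclosed.closure_subset_iff.mpr hspan (dense_span_range_indicator.closure_eq ▸ mem_univ a)

section blockMap

variable {C : ℕ → Set ℕ}

open Classical in
def blockMap (C : ℕ → Set ℕ) : ℓ^∞(ℕ, ℝ) →L[ℝ] ℓ^∞(ℕ, ℝ) :=
  LinearMap.mkContinuous
    { toFun a := ofBounded (fun n => if h : ∃ k, n ∈ C k then a h.choose else 0) ‖a‖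
        fun n => by split_ifs; exacts [abs_apply_le_norm a _, by simp]
      map_add' a b := lp.ext <| funext fun n => by
        simp only [coe_ofBounded, lp.coeFn_add, Pi.add_apply]; split_ifs <;> simp
      map_smul' c a := lp.ext <| funext fun n => by
        simp only [coe_ofBounded, lp.coeFn_smul, Pi.smul_apply, smul_eq_mul, RingHom.id_apply]
        split_ifs <;> simp }
    1 fun a => by simpa using norm_ofBounded_le _ _ _

lemma blockMap_apply_of_mem (hC : Pairwise (Disjoint on C)) {n k : ℕ} (hn : n ∈ C k)
    (a : ℓ^∞(ℕ, ℝ)) : blockMap C a n = a k := by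
  have h : ∃ k, n ∈ C k := ⟨k, hn⟩
  have hk : h.choose = k := hC.eq (not_disjoint_iff.mpr ⟨n, h.choose_spec, hn⟩)
  simp [blockMap, h, hk]

lemma blockMap_apply_of_forall_notMem {n : ℕ} (hn : ∀ k, n ∉ C k) (a : ℓ^∞(ℕ, ℝ)) :
    blockMap C a n = 0 := by
  simp [blockMap, hn]

lemma norm_blockMap_le (a : ℓ^∞(ℕ, ℝ)) : ‖blockMap C a‖ ≤ ‖a‖ :=
  by simpa using (blockMap C).le_of_opNorm_le (LinearMap.mkContinuous_norm_le _ zero_le_one _) a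

lemma norm_blockMap (hC : Pairwise (Disjoint on C)) (hne : ∀ k, (C k).Nonempty)
    (a : ℓ^∞(ℕ, ℝ)) : ‖blockMap C a‖ = ‖a‖ := by
  refine (norm_blockMap_le a).antisymm (norm_le_of_forall_abs_le _ (norm_nonneg _) fun k => ?_)
  obtain ⟨n, hn⟩ := hne k
  rw [← blockMap_apply_of_mem hC hn]
  exact abs_apply_le_norm _ n

lemma blockMap_indicator (hC : Pairwise (Disjoint on C)) (E : Set ℕ) :
    blockMap C (indicator E) = indicator (⋃ k ∈ E, C k) := by
  refine lp.ext (funext fun n => ?_)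
  by_cases hn : ∃ j, n ∈ C j
  · obtain ⟨j, hj⟩ := hn
    have hmem : n ∈ ⋃ k ∈ E, C k ↔ j ∈ E := by
      simp only [mem_iUnion, exists_prop]
      exact ⟨fun ⟨k, hk, hnk⟩ => hC.eq (not_disjoint_iff.mpr ⟨n, hnk, hj⟩) ▸ hk,
        fun hjE => ⟨j, hjE, hj⟩⟩
    by_cases hjE : j ∈ E <;> simp [blockMap_apply_of_mem hC hj, hjE, hmem]
  · push Not at hn
    simp [blockMap_apply_of_forall_notMem hn, hn]

end blockMap

section reindex

variable {f : ℕ → ℕ}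

def reindex (f : ℕ → ℕ) : ℓ^∞(ℕ, ℝ) →L[ℝ] ℓ^∞(ℕ, ℝ) := blockMap fun k => {f k}

lemma pairwise_disjoint_singleton (hf : Injective f) :
    Pairwise (Disjoint on fun k => ({f k} : Set ℕ)) :=
  fun _ _ hij => disjoint_singleton.mpr (hf.ne hij)

lemma reindex_apply_self (hf : Injective f) (a : ℓ^∞(ℕ, ℝ)) (k : ℕ) : reindex f a (f k) = a k :=
  blockMap_apply_of_mem (pairwise_disjoint_singleton hf) rfl a

lemma reindex_apply_of_notMem_range {n : ℕ} (hn : n ∉ range f) (a : ℓ^∞(ℕ, ℝ)) :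
    reindex f a n = 0 :=
  blockMap_apply_of_forall_notMem (fun k hk => hn ⟨k, (mem_singleton_iff.mp hk).symm⟩) a

lemma norm_reindex (hf : Injective f) (a : ℓ^∞(ℕ, ℝ)) : ‖reindex f a‖ = ‖a‖ :=
  norm_blockMap (pairwise_disjoint_singleton hf) (fun _ => singleton_nonempty _) a

lemma reindex_indicator (hf : Injective f) (E : Set ℕ) :
    reindex f (indicator E) = indicator (f '' E) := by
  rw [reindex, blockMap_indicator (pairwise_disjoint_singleton hf), image_eq_iUnion]

end reindex

end Linfty

open Linfty

structure BoundedContents (μ : ℕ → Set ℕ → ℝ) (K : ℝ) : Prop where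
  nonneg : ∀ m E, 0 ≤ μ m E
  union_of_disjoint : ∀ m {E F : Set ℕ}, Disjoint E F → μ m (E ∪ F) = μ m E + μ m F
  le_bound : ∀ m E, μ m E ≤ K

abbrev InfiniteDisjointFamily : Type :=
  {B : ℕ → Set ℕ // Pairwise (Disjoint on B) ∧ ∀ i, (B i).Infinite}

namespace BoundedContents

variable {μ : ℕ → Set ℕ → ℝ} {K : ℝ}

lemma mono (hμ : BoundedContents μ K) (m : ℕ) {E F : Set ℕ} (h : E ⊆ F) : μ m E ≤ μ m F := by
  have := hμ.union_of_disjoint m (disjoint_sdiff_right (s := E) (t := F))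
  rw [union_sdiff_cancel h] at this
  linarith [hμ.nonneg m (F \ E)]

lemma union_le (hμ : BoundedContents μ K) (m : ℕ) (E F : Set ℕ) :
    μ m (E ∪ F) ≤ μ m E + μ m F := by
  rw [← union_sdiff_self, hμ.union_of_disjoint m disjoint_sdiff_right]
  linarith [hμ.mono m (sdiff_subset : F \ E ⊆ F)]

lemma biUnion_eq_sum (hμ : BoundedContents μ K) (m : ℕ) {ι : Type*} (s : Finset ι)
    {E : ι → Set ℕ} (hE : (s : Set ι).PairwiseDisjoint E) :
    μ m (⋃ i ∈ s, E i) = ∑ i ∈ s, μ m (E i) := by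
  classical
  induction s using Finset.induction_on with
  | empty => simpa using hμ.union_of_disjoint m (disjoint_empty (∅ : Set ℕ))
  | insert j s hj ih =>
    rw [Finset.coe_insert] at hE
    rw [Finset.set_biUnion_insert, Finset.sum_insert hj,
      hμ.union_of_disjoint m (disjoint_iUnion₂_right.mpr fun i (hi : i ∈ s) => hE (mem_insert j _)
        (mem_insert_of_mem j (Finset.mem_coe.mpr hi)) (ne_of_mem_of_not_mem hi hj).symm),
      ih (hE.subset (subset_insert j _))]

lemma sum_le (hμ : BoundedContents μ K) (m : ℕ) {ι : Type*} (s : Finset ι)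
    {E : ι → Set ℕ} (hE : (s : Set ι).PairwiseDisjoint E) : ∑ i ∈ s, μ m (E i) ≤ K :=
  hμ.biUnion_eq_sum m s hE ▸ hμ.le_bound m _

lemma bound_nonneg (hμ : BoundedContents μ K) : 0 ≤ K :=
  (hμ.nonneg 0 ∅).trans (hμ.le_bound 0 ∅)

lemma finite_setOf_eventually_finite_sdiff (hμ : BoundedContents μ K) {η : ℝ} (hη : 0 < η)
    {D : ℕ → Set ℕ} (hD : ∀ s, (D s).Infinite) :
    {m | ∀ᶠ s in cofinite, (D s \ {z | η < μ z {m}}).Finite}.Finite := by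
  by_contra hinf
  obtain ⟨M, hMsub, hMcard⟩ := Set.Infinite.exists_subset_card_eq hinf (⌊K / η⌋₊ + 1)
  have hM : ∀ᶠ s in cofinite, ∀ m ∈ M, (D s \ {z | η < μ z {m}}).Finite :=
    (eventually_all_finset M).mpr fun m hm => hMsub hm
  obtain ⟨s, hs⟩ := hM.exists
  obtain ⟨z, hzD, hz⟩ := ((hD s).sdiff (M.finite_toSet.biUnion fun m hm => hs m hm)).nonempty
  have hcharged : ∀ m ∈ M, η ≤ μ z {m} := fun m hm => by
    by_contra h
    exact hz (mem_biUnion hm ⟨hzD, (not_le.mp h).not_gt⟩)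
  have hK : K < (⌊K / η⌋₊ + 1) * η := (div_lt_iff₀ hη).mp (Nat.lt_floor_add_one _)
  have := calc
    (⌊K / η⌋₊ + 1) * η = ∑ _m ∈ M, η := by simp [hMcard]
    _ ≤ ∑ m ∈ M, μ z {m} := Finset.sum_le_sum hcharged
    _ ≤ K := hμ.sum_le z M fun i _ j _ hij => disjoint_singleton.mpr hij
  linarith

lemma exists_light_point (hμ : BoundedContents μ K) {B : ℕ → Set ℕ}
    (hB : Pairwise (Disjoint on B)) (hBinf : ∀ i, (B i).Infinite) {ε η : ℝ} (hε : 0 < ε)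
    (hη : 0 < η) :
    ∃ m ∈ B 0, ∃ g : ℕ → ℕ, Injective g ∧ (∀ k, g k ≠ 0) ∧ μ m (⋃ k, B (g k)) ≤ ε ∧
      ∀ k, (B (g k) \ {z | η < μ z {m}}).Infinite := by
  obtain ⟨P, hP⟩ := exists_nat_gt (K / ε)
  have hKP : K < P * ε := (div_lt_iff₀ hε).mp hP
  have hP0 : 0 < P := Nat.cast_pos.mp (lt_of_le_of_lt (div_nonneg hμ.bound_nonneg hε.le) hP)
  -- `P > K / ε` pairwise disjoint arms `⋃ s, B (arm t s)` avoiding `B 0`; `μ m` is light on one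
  let arm (t s : ℕ) : ℕ := Nat.pair t s + 1
  have arm_eq {t s t' s'} : arm t s = arm t' s' ↔ t = t' ∧ s = s' := by
    simp [arm, Nat.pair_eq_pair]
  have hbad : (⋃ t ∈ Finset.range P,
      {m | ∀ᶠ s in cofinite, (B (arm t s) \ {z | η < μ z {m}}).Finite}).Finite :=
    (Finset.range P).finite_toSet.biUnion fun t _ =>
      hμ.finite_setOf_eventually_finite_sdiff hη fun s => hBinf _
  obtain ⟨m, hm0, hmgood⟩ := ((hBinf 0).sdiff hbad).nonempty
  have harms : (Finset.range P : Set ℕ).PairwiseDisjoint fun t => ⋃ s, B (arm t s) :=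
    fun t _ t' _ htt' => disjoint_iUnion_left.mpr fun s => disjoint_iUnion_right.mpr fun s' =>
      hB fun h => htt' (arm_eq.mp h).1
  obtain ⟨t, ht, hlight⟩ : ∃ t ∈ Finset.range P, μ m (⋃ s, B (arm t s)) ≤ ε := by
    refine Finset.exists_le_of_sum_le (Finset.nonempty_range_iff.mpr hP0.ne') ?_
    calc ∑ t ∈ Finset.range P, μ m (⋃ s, B (arm t s)) ≤ K := hμ.sum_le m _ harms
      _ ≤ ∑ _t ∈ Finset.range P, ε := by simp; linarith
  have hinf : {s | (B (arm t s) \ {z | η < μ z {m}}).Infinite}.Infinite := by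
    have : ¬∀ᶠ s in cofinite, (B (arm t s) \ {z | η < μ z {m}}).Finite :=
      fun h => hmgood (mem_biUnion ht h)
    simpa only [not_eventually, frequently_cofinite_iff_infinite, Set.not_finite] using this
  let u := hinf.natEmbedding
  refine ⟨m, hm0, fun k => arm t (u k), fun k k' h => u.injective (Subtype.ext (arm_eq.mp h).2),
    fun k => Nat.succ_ne_zero _, ?_, fun k => (u k).2⟩
  exact (hμ.mono m (iUnion_subset fun k => subset_iUnion (fun s => B (arm t s)) _)).trans hlight

lemma exists_light_point_subfamily (hμ : BoundedContents μ K) {ε η : ℝ} (hε : 0 < ε) (hη : 0 < η)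
    (B : InfiniteDisjointFamily) :
    ∃ m, ∃ B' : InfiniteDisjointFamily,
      m ∈ ⋃ i, B.1 i ∧ (⋃ i, B'.1 i) ⊆ (⋃ i, B.1 i) \ {m} ∧ μ m (⋃ i, B'.1 i) ≤ ε ∧
      ∀ z ∈ ⋃ i, B'.1 i, μ z {m} ≤ η := by
  obtain ⟨B, hB, hBinf⟩ := B
  obtain ⟨m, hm0, g, hg, hg0, hlight, hinf⟩ := hμ.exists_light_point hB hBinf hε hη
  have hsub : (⋃ k, B (g k) \ {z | η < μ z {m}}) ⊆ ⋃ k, B (g k) :=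
    iUnion_mono fun k => sdiff_subset
  refine ⟨m, ⟨fun k => B (g k) \ {z | η < μ z {m}}, fun k k' hkk' =>
    (hB (hg.ne hkk')).mono sdiff_subset sdiff_subset, hinf⟩, mem_iUnion_of_mem 0 hm0, ?_,
    (hμ.mono m hsub).trans hlight, ?_⟩
  · refine fun z hz => ⟨iUnion_subset (fun k => subset_iUnion B (g k)) (hsub hz), ?_⟩
    rintro rfl
    obtain ⟨k, hk⟩ := mem_iUnion.mp (hsub hz)
    exact disjoint_left.mp (hB (hg0 k).symm) hm0 hk
  · intro z hz
    obtain ⟨k, -, hk⟩ := mem_iUnion.mp hz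
    exact not_lt.mp hk

theorem rosenthal (hμ : BoundedContents μ K) {ε : ℝ} (hε : 0 < ε) :
    ∃ A : ℕ → ℕ, Injective A ∧ ∀ u, μ (A u) (range A \ {A u}) ≤ ε := by
  have step (t : ℕ) := hμ.exists_light_point_subfamily (by positivity : 0 < ε / 4)
    (by positivity : 0 < ε / 8 * (1 / 2) ^ t)
  choose point next hmem hsub hlight hsmall using step
  let B₀ : InfiniteDisjointFamily :=
    ⟨fun i => range (Nat.pair i), fun i j hij => disjoint_left.mpr <| by
      rintro _ ⟨k, rfl⟩ ⟨k', h⟩; exact hij (Nat.pair_eq_pair.mp h).1.symm,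
     fun i => infinite_range_of_injective fun k k' h => (Nat.pair_eq_pair.mp h).2⟩
  let fam (t : ℕ) : InfiniteDisjointFamily := Nat.rec B₀ (fun t B => next t B) t
  let U (t : ℕ) : Set ℕ := ⋃ i, (fam t).1 i
  let A (t : ℕ) : ℕ := point t (fam t)
  have hU : Antitone U := antitone_nat_of_succ_le fun t => (hsub t _).trans sdiff_subset
  have hA_mem {u w : ℕ} (h : u < w) : A w ∈ U (u + 1) := hU h (hmem w _)
  have hA_ne {u w : ℕ} (h : u < w) : A w ≠ A u := fun hw => (hsub u _ (hA_mem h)).2 hw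
  have hA : Injective A := fun u w h => by
    rcases lt_trichotomy u w with huw | rfl | hwu
    exacts [absurd h.symm (hA_ne huw), rfl, absurd h (hA_ne hwu)]
  refine ⟨A, hA, fun u => ?_⟩
  -- `μ (A u)` charges each earlier `A s` little as `A u ∈ U (s + 1)`; later points are in
  -- `U (u + 1)`
  have hsplit : range A \ {A u} ⊆ (⋃ s ∈ Finset.range u, {A s}) ∪ U (u + 1) := by
    rintro _ ⟨⟨w, rfl⟩, hw⟩
    rcases lt_trichotomy w u with hwu | rfl | huw
    exacts [Or.inl (mem_biUnion (Finset.mem_range.mpr hwu) rfl), absurd rfl hw,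
      Or.inr (hA_mem huw)]
  have hpast : μ (A u) (⋃ s ∈ Finset.range u, {A s}) ≤ ε / 4 := by
    rw [hμ.biUnion_eq_sum _ _ fun s _ s' _ h => disjoint_singleton.mpr (hA.ne h)]
    calc ∑ s ∈ Finset.range u, μ (A u) {A s}
        ≤ ∑ s ∈ Finset.range u, ε / 8 * (1 / 2) ^ s := Finset.sum_le_sum fun s hs =>
          hsmall s _ _ (hU (Finset.mem_range.mp hs) (hmem u _))
      _ ≤ ε / 4 := by rw [← Finset.mul_sum]; nlinarith [sum_geometric_two_le u]
  calc μ (A u) (range A \ {A u})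
      ≤ μ (A u) (⋃ s ∈ Finset.range u, {A s}) + μ (A u) (U (u + 1)) :=
        (hμ.mono _ hsplit).trans (hμ.union_le _ _ _)
    _ ≤ ε := by linarith [hlight u (fam u)]

end BoundedContents

lemma ContinuousLinearMap.exists_norm_lt_one_lt_apply {E : Type*} [NormedAddCommGroup E]
    [NormedSpace ℝ E] (ψ : E →L[ℝ] ℝ) {r : ℝ} (hr : r < ‖ψ‖) :
    ∃ a, ‖a‖ < 1 ∧ r < ψ a := by
  obtain ⟨a, ha, hψa⟩ := ψ.exists_lt_apply_of_lt_opNorm hr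
  rcases le_or_gt 0 (ψ a) with h | h
  · exact ⟨a, ha, by rwa [Real.norm_of_nonneg h] at hψa⟩
  · rw [Real.norm_eq_abs, abs_of_neg h] at hψa
    exact ⟨-a, by rwa [norm_neg], by rwa [map_neg]⟩

namespace Linfty

lemma indicator_mul_indicator (E F : Set ℕ) :
    indicator E * indicator F = indicator (E ∩ F) :=
  lp.ext <| funext fun n => by
    by_cases hE : n ∈ E <;> by_cases hF : n ∈ F <;> simp [lp.infty_coeFn_mul, hE, hF]

def content (φ : ℓ^∞(ℕ, ℝ) →L[ℝ] ℝ) (E : Set ℕ) : ℝ :=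
  ‖φ.comp (ContinuousLinearMap.mul ℝ _ (indicator E))‖

variable (φ : ℓ^∞(ℕ, ℝ) →L[ℝ] ℝ)

lemma content_le_norm (E : Set ℕ) : content φ E ≤ ‖φ‖ :=
  (φ.opNorm_comp_le _).trans <| mul_le_of_le_one_right (norm_nonneg φ) <|
    (ContinuousLinearMap.opNorm_mul_apply_le ℝ _ _).trans (norm_indicator_le E)

lemma abs_apply_le_content {E : Set ℕ} {a : ℓ^∞(ℕ, ℝ)} (ha : indicator E * a = a) :
    |φ a| ≤ content φ E * ‖a‖ := by
  simpa [content, ha] using (φ.comp (ContinuousLinearMap.mul ℝ _ (indicator E))).le_opNorm a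

lemma content_union {E F : Set ℕ} (h : Disjoint E F) :
    content φ (E ∪ F) = content φ E + content φ F := by
  refine le_antisymm ?_ (le_of_not_gt fun hlt => ?_)
  · rw [content, indicator_union_of_disjoint h, map_add, ContinuousLinearMap.comp_add]
    exact norm_add_le _ _
  · -- almost-norming vectors for `E` and for `F` glue to one for `E ∪ F`
    let d := (content φ E + content φ F - content φ (E ∪ F)) / 2
    have hd : 0 < d := by simp only [d]; linarith
    have hd2 : 2 * d = content φ E + content φ F - content φ (E ∪ F) := by simp only [d]; ring
    obtain ⟨a, ha, hφa⟩ := (φ.comp (.mul ℝ _ (indicator E))).exists_norm_lt_one_lt_apply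
      (show content φ E - d < content φ E by linarith)
    obtain ⟨b, hb, hφb⟩ := (φ.comp (.mul ℝ _ (indicator F))).exists_norm_lt_one_lt_apply
      (show content φ F - d < content φ F by linarith)
    set c := indicator E * a + indicator F * b
    have hc : indicator (E ∪ F) * c = c := by
      rw [mul_add, ← mul_assoc, ← mul_assoc, indicator_mul_indicator, indicator_mul_indicator,
        inter_eq_right.mpr subset_union_left, inter_eq_right.mpr subset_union_right]
    have hc1 : ‖c‖ ≤ 1 := norm_le_of_forall_abs_le _ zero_le_one fun n => by
      have := abs_apply_le_norm a n; have := abs_apply_le_norm b n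
      by_cases hE : n ∈ E <;> by_cases hF : n ∈ F
      · exact absurd h (not_disjoint_iff.mpr ⟨n, hE, hF⟩)
      all_goals rw [lp.coeFn_add, coe_indicator_mul, coe_indicator_mul]; simp [hE, hF] <;> linarith
    have := calc
      content φ E - d + (content φ F - d) < φ (indicator E * a) + φ (indicator F * b) := by
          simpa using add_lt_add hφa hφb
      _ = φ c := (map_add φ _ _).symm
      _ ≤ content φ (E ∪ F) * ‖c‖ := (le_abs_self _).trans (abs_apply_le_content φ hc)
      _ ≤ content φ (E ∪ F) := mul_le_of_le_one_right (norm_nonneg _) hc1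
    linarith

lemma boundedContents_content {φ : ℕ → ℓ^∞(ℕ, ℝ) →L[ℝ] ℝ} {K : ℝ} (hφ : ∀ k, ‖φ k‖ ≤ K) :
    BoundedContents (fun k => content (φ k)) K where
  nonneg _ _ := norm_nonneg _
  union_of_disjoint k _ _ h := content_union (φ k) h
  le_bound k E := (content_le_norm (φ k) E).trans (hφ k)

end Linfty

namespace ContainsLinfty

variable {Z : Type*} [NormedAddCommGroup Z] [NormedSpace ℝ Z]

theorem of_le_norm_map_single (G : ℓ^∞(ℕ, ℝ) →L[ℝ] Z) {δ : ℝ} (hδ : 0 < δ)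
    (hG : ∀ k, δ ≤ ‖G (indicator {k})‖) : ContainsLinfty Z := by
  choose w hw1 hw using fun k => exists_dual_vector ℝ _ (hδ.trans_le (hG k)).ne'
  let φ k := (w k).comp G
  have hφ k : ‖φ k‖ ≤ ‖G‖ := ((w k).opNorm_comp_le G).trans (by rw [hw1, one_mul])
  obtain ⟨A, hA, hAδ⟩ := (boundedContents_content hφ).rosenthal (by positivity : 0 < δ / 4)
  refine ⟨G.comp (reindex A), δ / 2, half_pos hδ, fun a => ?_⟩
  rcases eq_or_ne a 0 with rfl | ha
  · simp
  obtain ⟨u, hu⟩ := exists_lt_abs_apply ha (by norm_num : (3 / 4 : ℝ) < 1)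
  -- `b` is `a u` at the coordinate `A u` plus a rest `r` on which `φ (A u)` is small
  let b := reindex A a
  let r := indicator (range A \ {A u}) * b
  have hb : b = a u • indicator {A u} + r := lp.ext <| funext fun n => by
    rw [lp.coeFn_add, lp.coeFn_smul, coe_indicator_mul, coe_indicator]
    by_cases hn : n ∈ range A
    · obtain ⟨k, rfl⟩ := hn
      by_cases hk : k = u
      · subst hk; simp [b, reindex_apply_self hA]
      · simp [b, reindex_apply_self hA, hA.ne hk]
    · have hnu : n ≠ A u := fun h => hn ⟨u, h.symm⟩
      simp [b, reindex_apply_of_notMem_range hn, hnu, hn]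
  have hr : |φ (A u) r| ≤ δ / 4 * ‖a‖ := by
    have hrb : ‖r‖ ≤ ‖a‖ := (norm_mul_le _ _).trans <|
      (mul_le_of_le_one_left (norm_nonneg _) (norm_indicator_le _)).trans_eq (norm_reindex hA a)
    calc |φ (A u) r| ≤ content (φ (A u)) (range A \ {A u}) * ‖r‖ :=
          abs_apply_le_content _ (by rw [← mul_assoc, indicator_mul_indicator, inter_self])
      _ ≤ δ / 4 * ‖a‖ := mul_le_mul (hAδ u) hrb (norm_nonneg _) (by positivity)
  have hφb : φ (A u) b = a u * ‖G (indicator {A u})‖ + φ (A u) r := by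
    rw [hb, map_add, map_smul, smul_eq_mul]
    simp [φ, hw]
  calc δ / 2 * ‖a‖ ≤ |a u| * δ - δ / 4 * ‖a‖ := by nlinarith
    _ ≤ |a u| * ‖G (indicator {A u})‖ - |φ (A u) r| :=
        sub_le_sub (mul_le_mul_of_nonneg_left (hG _) (abs_nonneg _)) hr
    _ ≤ |φ (A u) b| := by
        rw [hφb]
        simpa [abs_mul] using abs_sub_abs_le_abs_add (a u * ‖G (indicator {A u})‖) (φ (A u) r)
    _ ≤ ‖G b‖ := by simpa [φ, hw1] using (w (A u)).le_opNorm (G b)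

theorem of_le_norm_map_indicator (S : ℓ^∞(ℕ, ℝ) →L[ℝ] Z) {C : ℕ → Set ℕ}
    (hC : Pairwise (Disjoint on C)) {δ : ℝ} (hδ : 0 < δ)
    (hS : ∀ k, δ ≤ ‖S (indicator (C k))‖) : ContainsLinfty Z :=
  of_le_norm_map_single (S.comp (blockMap C)) hδ fun k => by
    simpa [blockMap_indicator hC] using hS k

theorem of_infinite_setOf_le_norm_map_single (S : ℓ^∞(ℕ, ℝ) →L[ℝ] Z) {δ : ℝ} (hδ : 0 < δ)
    (hS : {j | δ ≤ ‖S (indicator {j})‖}.Infinite) : ContainsLinfty Z := by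
  let u := hS.natEmbedding
  have hu : Injective (u · : ℕ → ℕ) := Subtype.val_injective.comp u.injective
  refine of_le_norm_map_single (S.comp (reindex (u ·))) hδ fun k => ?_
  rw [ContinuousLinearMap.comp_apply, reindex_indicator hu, image_singleton]
  exact (u k).2

end ContainsLinfty

namespace Linfty

variable {X : Type*} [NormedAddCommGroup X] [NormedSpace ℝ X]

lemma norm_apply_smul_le (d : ℕ → X) (a : ℓ^∞(ℕ, ℝ)) (m : ℕ) : ‖a m • d m‖ ≤ ‖a‖ * ‖d m‖ := by
  rw [norm_smul, Real.norm_eq_abs]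
  exact mul_le_mul_of_nonneg_right (abs_apply_le_norm a m) (norm_nonneg _)

variable [CompleteSpace X]

lemma summable_apply_smul {d : ℕ → X} (hd : Summable (‖d ·‖)) (a : ℓ^∞(ℕ, ℝ)) :
    Summable fun m => a m • d m :=
  .of_norm_bounded (hd.mul_left ‖a‖) (norm_apply_smul_le d a)

def sumSMul (d : ℕ → X) (hd : Summable (‖d ·‖)) : ℓ^∞(ℕ, ℝ) →L[ℝ] X :=
  LinearMap.mkContinuous
    { toFun a := ∑' m, a m • d m
      map_add' a b := by
        simp only [lp.coeFn_add, Pi.add_apply, add_smul]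
        exact (summable_apply_smul hd a).tsum_add (summable_apply_smul hd b)
      map_smul' c a := by
        simp only [lp.coeFn_smul, Pi.smul_apply, smul_eq_mul, mul_smul, RingHom.id_apply]
        exact (summable_apply_smul hd a).tsum_const_smul c }
    (∑' m, ‖d m‖) fun a => by
      rw [mul_comm, ← tsum_mul_left]
      exact tsum_of_norm_bounded (hd.mul_left ‖a‖).hasSum (norm_apply_smul_le d a)

lemma norm_sumSMul_apply_le {d : ℕ → X} (hd : Summable (‖d ·‖)) (a : ℓ^∞(ℕ, ℝ)) :
    ‖sumSMul d hd a‖ ≤ (∑' m, ‖d m‖) * ‖a‖ :=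
  (sumSMul d hd).le_of_opNorm_le (LinearMap.mkContinuous_norm_le _ (tsum_nonneg fun _ =>
    norm_nonneg _) _) a

lemma sumSMul_indicator_singleton {d : ℕ → X} (hd : Summable (‖d ·‖)) (m : ℕ) :
    sumSMul d hd (indicator {m}) = d m := by
  change ∑' k, indicator {m} k • d k = d m
  rw [tsum_eq_single m fun k hk => by simp [hk]]
  simp

end Linfty

lemma Submodule.exists_mem_norm_sub_lt {X : Type*} [NormedAddCommGroup X] [NormedSpace ℝ X]
    (Y : Submodule ℝ X) {x : X} {δ : ℝ} (hx : ‖Y.mkQ x‖ < δ) : ∃ y ∈ Y, ‖x - y‖ < δ := by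
  obtain ⟨z, hz, hzδ⟩ := Submodule.Quotient.norm_mk_lt (Y.mkQ x) (sub_pos.mpr hx)
  refine ⟨x - z, ?_, by rwa [sub_sub_cancel, ← add_sub_assoc, add_sub_cancel_left] at *⟩
  rw [← Submodule.Quotient.mk_eq_zero, Submodule.Quotient.mk_sub, hz, Submodule.mkQ_apply, sub_self]

theorem exists_boundedBelow_map_single_mem {X : Type*} [NormedAddCommGroup X] [NormedSpace ℝ X]
    [CompleteSpace X] (Y : Submodule ℝ X) (T : ℓ^∞(ℕ, ℝ) →L[ℝ] X) {c : ℝ} (hc : 0 < c)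
    (hT : ∀ a, c * ‖a‖ ≤ ‖T a‖) (hsmall : ∀ δ > 0, {j | ‖Y.mkQ (T (indicator {j}))‖ < δ}.Infinite) :
    ∃ V : ℓ^∞(ℕ, ℝ) →L[ℝ] X, (∀ a, c / 2 * ‖a‖ ≤ ‖V a‖) ∧ ∀ m, V (indicator {m}) ∈ Y := by
  let δ (m : ℕ) : ℝ := c / 4 * (1 / 2) ^ m
  obtain ⟨j, hj, hjδ⟩ : ∃ j : ℕ → ℕ, StrictMono j ∧ ∀ m, ‖Y.mkQ (T (indicator {j m}))‖ < δ m :=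
    extraction_forall_of_frequently fun m =>
      Nat.frequently_atTop_iff_infinite.mpr (hsmall _ (by positivity))
  choose y hyY hy using fun m => Y.exists_mem_norm_sub_lt (hjδ m)
  -- perturb `T ∘ reindex j` by `sumSMul d`, of norm `≤ c / 2`, to move all unit vectors into `Y`
  let d (m : ℕ) : X := y m - T (indicator {j m})
  have hdδ (m : ℕ) : ‖d m‖ ≤ δ m := by rw [norm_sub_rev]; exact (hy m).le
  have hδ : HasSum δ (c / 2) := by
    have := hasSum_geometric_two.mul_left (c / 4)
    rwa [show c / 4 * 2 = c / 2 by ring] at this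
  have hd : Summable (‖d ·‖) := .of_nonneg_of_le (fun _ => norm_nonneg _) hdδ hδ.summable
  have hdsum : ∑' m, ‖d m‖ ≤ c / 2 := hδ.tsum_eq ▸ hd.tsum_le_tsum hdδ hδ.summable
  refine ⟨T.comp (reindex j) + sumSMul d hd, fun a => ?_, fun m => ?_⟩
  · have h1 := hT (reindex j a)
    have h2 := norm_sumSMul_apply_le hd a
    rw [norm_reindex hj.injective] at h1
    calc c / 2 * ‖a‖ ≤ ‖T (reindex j a)‖ - ‖sumSMul d hd a‖ := by nlinarith [norm_nonneg a]
      _ ≤ ‖T (reindex j a) + sumSMul d hd a‖ := by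
          simpa using norm_sub_norm_le (T (reindex j a)) (-sumSMul d hd a)
  · simpa [reindex_indicator hj.injective, sumSMul_indicator_singleton, d] using hyY m

instance : Uncountable (ℕ → Bool) := by
  refine ⟨fun (_ : Countable (ℕ → Bool)) => ?_⟩
  obtain ⟨f, hf⟩ := exists_surjective_nat (ℕ → Bool)
  obtain ⟨m, hm⟩ := hf fun n => !f n n
  simpa using congrFun hm m

lemma exists_pos_infinite_setOf_lt {α : Type*} [Uncountable α] (σ : α → ℝ)
    (hσ : ∀ x, 0 < σ x) : ∃ ε > 0, {x | ε < σ x}.Infinite := by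
  by_contra! h
  refine not_countable (α := α) (countable_univ_iff.mp ?_)
  refine (countable_iUnion fun n : ℕ => (h (1 / (n + 1)) (by positivity)).countable).mono
    fun x _ => mem_iUnion.mpr (exists_nat_one_div_lt (hσ x))

def prefixCode (x : ℕ → Bool) (n : ℕ) : ℕ := Encodable.encode (List.ofFn fun i : Fin n => x i)

lemma prefixCode_injective (x : ℕ → Bool) : Injective (prefixCode x) := fun n m h => by
  simpa using congrArg List.length (Encodable.encode_injective h)

lemma pairwise_finite_range_prefixCode_inter :
    Pairwise fun x y : ℕ → Bool => (range (prefixCode x) ∩ range (prefixCode y)).Finite := by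
  intro x y hxy
  obtain ⟨d, hd⟩ := Function.ne_iff.mp hxy
  refine ((finite_Iic d).image (prefixCode x)).subset ?_
  rintro _ ⟨⟨n, rfl⟩, ⟨m, hm⟩⟩
  have h := Encodable.encode_injective hm
  obtain rfl : m = n := by simpa using congrArg List.length h
  have hxy (i : Fin m) : y i = x i := congrFun (List.ofFn_injective h) i
  refine ⟨m, mem_Iic.mpr (le_of_not_gt fun hdm => hd (hxy ⟨d, hdm⟩).symm), rfl⟩

lemma finite_sdiff_disjointed {D : ℕ → Set ℕ} (hD : Pairwise fun l m => (D l ∩ D m).Finite)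
    (m : ℕ) : (D m \ disjointed D m).Finite := by
  rw [disjointed_apply, sdiff_sdiff_right_self, Finset.sup_set_eq_biUnion, inter_iUnion₂]
  exact (Finset.Iio m).finite_toSet.biUnion fun l hl =>
    hD (Finset.mem_Iio.mp hl).ne'

namespace ContainsLinfty

variable {Z : Type*} [NormedAddCommGroup Z] [NormedSpace ℝ Z]

theorem of_almostDisjoint {α : Type*} [Uncountable α] {R : α → Set ℕ}
    (hR : Pairwise fun x y => (R x ∩ R y).Finite) (S : ℓ^∞(ℕ, ℝ) →L[ℝ] Z)
    (hS : ∀ j, S (indicator {j}) = 0) (h : ∀ x, ∃ C ⊆ R x, S (indicator C) ≠ 0) :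
    ContainsLinfty Z := by
  choose C hCR hC using h
  obtain ⟨ε, hε, hinf⟩ :=
    exists_pos_infinite_setOf_lt (fun x => ‖S (indicator (C x))‖) fun x => norm_pos_iff.mpr (hC x)
  let x := hinf.natEmbedding
  let D (m : ℕ) := C (x m)
  have hD : Pairwise fun l m => (D l ∩ D m).Finite := fun l m hlm =>
    (hR fun h => hlm (x.injective (Subtype.ext h))).subset (inter_subset_inter (hCR _) (hCR _))
  refine of_le_norm_map_indicator S (disjoint_disjointed D) hε fun m => ?_
  have hsplit := indicator_union_of_disjoint (disjoint_sdiff_right (s := disjointed D m) (t := D m))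
  rw [union_sdiff_cancel (disjointed_le D m)] at hsplit
  have h0 := map_indicator_eq_zero_of_finite S hS (finite_sdiff_disjointed hD m)
  rw [← add_zero (S (indicator (disjointed D m))), ← h0, ← map_add, ← hsplit]
  exact (x m).2.le

theorem of_map_indicator_mem {X : Type*} [NormedAddCommGroup X] [NormedSpace ℝ X]
    {Y : Submodule ℝ X} (hY : IsClosed (Y : Set X)) (V : ℓ^∞(ℕ, ℝ) →L[ℝ] X) {c : ℝ}
    (hc : 0 < c) (hV : ∀ a, c * ‖a‖ ≤ ‖V a‖) {f : ℕ → ℕ} (hf : Injective f)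
    (hVY : ∀ C ⊆ range f, V (indicator C) ∈ Y) : ContainsLinfty Y := by
  have hmem := map_mem_of_map_indicator_mem (V.comp (reindex f)) hY fun E => by
    simpa [reindex_indicator hf] using hVY _ (image_subset_range f E)
  refine ⟨(V.comp (reindex f)).codRestrict Y hmem, c, hc, fun a => ?_⟩
  simpa [norm_reindex hf] using hV (reindex f a)

end ContainsLinfty

/-- Not containing a copy of `ℓ∞` is a three-space property. -/
theorem stmt19 {X : Type*} [NormedAddCommGroup X] [NormedSpace ℝ X] [CompleteSpace X]
    (Y : Submodule ℝ X) (hY : IsClosed (Y : Set X))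
    (h1 : ¬ ContainsLinfty Y) (h2 : ¬ ContainsLinfty (X ⧸ Y)) :
    ¬ ContainsLinfty X := by
  rintro ⟨T, c, hc, hT⟩
  by_cases hbig : ∃ δ > 0, {j | ‖Y.mkQL.comp T (indicator {j})‖ < δ}.Finite
  · obtain ⟨δ, hδ, hfin⟩ := hbig
    refine h2 (.of_infinite_setOf_le_norm_map_single (Y.mkQL.comp T) hδ ?_)
    simpa only [compl_ofPred, not_lt] using hfin.infinite_compl
  push Not at hbig
  obtain ⟨V, hV, hVY⟩ := exists_boundedBelow_map_single_mem Y T hc hT hbig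
  by_cases hfits : ∃ x : ℕ → Bool, ∀ C ⊆ range (prefixCode x), V (indicator C) ∈ Y
  · obtain ⟨x, hx⟩ := hfits
    exact h1 (.of_map_indicator_mem hY V (half_pos hc) hV (prefixCode_injective x) hx)
  · push Not at hfits
    refine h2 (.of_almostDisjoint pairwise_finite_range_prefixCode_inter (Y.mkQL.comp V)
      (fun j => by simpa using hVY j) fun x => ?_)
    obtain ⟨C, hC, hCY⟩ := hfits x
    exact ⟨C, hC, by simpa using hCY⟩
end
end
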